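/- arXiv:1708.00740 — 3 statements merged into one kernel-verified Lean document; each statement's English description precedes it below -/
import Mathlib

section
/- For any tripartite density matrix ρ_ABC on C_A ⊗ C_B ⊗ C_C (not necessarily pure), the entanglement of formation and classical correlations satisfy the monogamy inequality E_f(ρ_AB) + J(A:C)_{ρ_AC} ≤ S(ρ_A), where ρ_AB and ρ_AC are the corresponding partial traces. -/
open scoped Matrix Kronecker ComplexOrder Classical
open Filter

noncomputable section

namespace QI

/-! ### Basic objects: states, entropy, partial traces -/

/-- The outer product `|v⟩⟨v|` of a vector with itself. -/
def proj {n : Type*} (v : n → ℂ) : Matrix n n ℂ :=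
  Matrix.of fun i j => v i * star (v j)

/-- The tensor product of two vectors. -/
def tensorVec {A B : Type*} (u : A → ℂ) (v : B → ℂ) : A × B → ℂ :=
  fun p => u p.1 * v p.2

/-- A unit (normalized) vector. -/
def UnitVec {n : Type*} [Fintype n] (v : n → ℂ) : Prop :=
  ∑ i, star (v i) * v i = 1

/-- A density matrix: positive semidefinite (hence Hermitian) with unit trace. -/
def IsDensityMatrix {n : Type*} [Fintype n] (ρ : Matrix n n ℂ) : Prop :=
  ρ.PosSemidef ∧ ρ.trace = 1

/-- A pure state: a rank-one projector onto a unit vector. -/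
def IsPure {n : Type*} [Fintype n] (ρ : Matrix n n ℂ) : Prop :=
  ∃ v : n → ℂ, UnitVec v ∧ ρ = proj v

/-- The von Neumann entropy (base 2), `S(ρ) = -Tr[ρ log₂ ρ] = -∑ λᵢ log₂ λᵢ`. -/
def entropy {n : Type*} [Fintype n] [DecidableEq n] (ρ : Matrix n n ℂ) : ℝ :=
  if h : ρ.IsHermitian then -∑ i, h.eigenvalues i * Real.logb 2 (h.eigenvalues i) else 0

/-- The Shannon entropy of a probability distribution. -/
def shannonEntropy {X : Type*} [Fintype X] (p : X → ℝ) : ℝ :=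
  -∑ x, p x * Real.logb 2 (p x)

/-- Partial trace over the second tensor factor. -/
def trB {A B : Type*} [Fintype A] [Fintype B] (ρ : Matrix (A × B) (A × B) ℂ) :
    Matrix A A ℂ :=
  Matrix.of fun a a' => ∑ b, ρ (a, b) (a', b)

/-- Partial trace over the first tensor factor. -/
def trA {A B : Type*} [Fintype A] [Fintype B] (ρ : Matrix (A × B) (A × B) ℂ) :
    Matrix B B ℂ :=
  Matrix.of fun b b' => ∑ a, ρ (a, b) (a, b')

/-- For a tripartite state on `A × B × E`, the partial trace over the middle factor `B`. -/
def trB3 {A B E : Type*} [Fintype A] [Fintype B] [Fintype E]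
    (ρ : Matrix (A × B × E) (A × B × E) ℂ) : Matrix (A × E) (A × E) ℂ :=
  Matrix.of fun p q => ∑ b, ρ (p.1, b, p.2) (q.1, b, q.2)

/-- For a tripartite state on `A × B × E`, the partial trace over the last factor `E`. -/
def trE3 {A B E : Type*} [Fintype A] [Fintype B] [Fintype E]
    (ρ : Matrix (A × B × E) (A × B × E) ℂ) : Matrix (A × B) (A × B) ℂ :=
  Matrix.of fun p q => ∑ e, ρ (p.1, p.2, e) (q.1, q.2, e)

/-- Quantum mutual information `I(A:B) = S(ρ_A) + S(ρ_B) - S(ρ_AB)`. -/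
def mutualInfo {A B : Type*} [Fintype A] [DecidableEq A] [Fintype B] [DecidableEq B]
    (ρ : Matrix (A × B) (A × B) ℂ) : ℝ :=
  entropy (trB ρ) + entropy (trA ρ) - entropy ρ

/-- Quantum conditional entropy `S(A|B) = S(ρ_AB) - S(ρ_B)`. -/
def condEnt {A B : Type*} [Fintype A] [DecidableEq A] [Fintype B] [DecidableEq B]
    (ρ : Matrix (A × B) (A × B) ℂ) : ℝ :=
  entropy ρ - entropy (trA ρ)

/-- Coherent information `I(A⟩B) = -S(A|B) = S(ρ_B) - S(ρ_AB)`. -/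
def cohInfo {A B : Type*} [Fintype A] [DecidableEq A] [Fintype B] [DecidableEq B]
    (ρ : Matrix (A × B) (A × B) ℂ) : ℝ :=
  entropy (trA ρ) - entropy ρ

/-! ### Measurements, classical correlations, discord -/

/-- Post-measurement state `∑ₓ Tr_B[(I ⊗ Mₓ)ρ] ⊗ |x⟩⟨x|` of a local POVM `{Mₓ}` on `B`. -/
def postMeas {A B : Type*} [Fintype A] [DecidableEq A] [Fintype B] [DecidableEq B] {m : ℕ}
    (M : Fin m → Matrix B B ℂ) (ρ : Matrix (A × B) (A × B) ℂ) :
    Matrix (A × Fin m) (A × Fin m) ℂ :=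
  Matrix.of fun p q =>
    if p.2 = q.2 then trB (((1 : Matrix A A ℂ) ⊗ₖ M p.2) * ρ) p.1 q.1 else 0

/-- Classical correlations `J(A:B) = sup` over local POVM measurements on `B` of the
mutual information of the post-measurement state. -/
def classicalCorr {A B : Type*} [Fintype A] [DecidableEq A] [Fintype B] [DecidableEq B]
    (ρ : Matrix (A × B) (A × B) ℂ) : ℝ :=
  sSup { r | ∃ (m : ℕ) (M : Fin m → Matrix B B ℂ),
    (∀ x, (M x).PosSemidef) ∧ (∑ x, M x = 1) ∧ r = mutualInfo (postMeas M ρ) }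

/-- Quantum discord `D(A:B) = I(A:B) - J(A:B)` (measurement on the second subsystem). -/
def discord {A B : Type*} [Fintype A] [DecidableEq A] [Fintype B] [DecidableEq B]
    (ρ : Matrix (A × B) (A × B) ℂ) : ℝ :=
  mutualInfo ρ - classicalCorr ρ

/-! ### Entanglement measures -/

/-- Entanglement of formation: the minimum average entanglement entropy over pure-state
ensembles realizing `ρ`. -/
def eof {A B : Type*} [Fintype A] [DecidableEq A] [Fintype B] [DecidableEq B]
    (ρ : Matrix (A × B) (A × B) ℂ) : ℝ :=
  sInf { r | ∃ (m : ℕ) (p : Fin m → ℝ) (ψ : Fin m → (A × B → ℂ)),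
    (∀ i, 0 ≤ p i) ∧ (∑ i, p i = 1) ∧ (∀ i, UnitVec (ψ i)) ∧
    ρ = ∑ i, (p i : ℂ) • proj (ψ i) ∧
    r = ∑ i, p i * entropy (trB (proj (ψ i))) }

/-- Separable states: convex combinations of product states. -/
def IsSeparable {A B : Type*} [Fintype A] [Fintype B]
    (ρ : Matrix (A × B) (A × B) ℂ) : Prop :=
  ∃ (m : ℕ) (p : Fin m → ℝ) (σA : Fin m → Matrix A A ℂ) (σB : Fin m → Matrix B B ℂ),
    (∀ i, 0 ≤ p i) ∧ (∑ i, p i = 1) ∧ (∀ i, IsDensityMatrix (σA i)) ∧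
    (∀ i, IsDensityMatrix (σB i)) ∧ ρ = ∑ i, (p i : ℂ) • (σA i ⊗ₖ σB i)

/-- The `k`-fold tensor power of a bipartite state, with tensor factors regrouped as
`(A^k) × (B^k)`. -/
def pow {A B : Type*} [Fintype A] [Fintype B] (ρ : Matrix (A × B) (A × B) ℂ) (k : ℕ) :
    Matrix ((Fin k → A) × (Fin k → B)) ((Fin k → A) × (Fin k → B)) ℂ :=
  Matrix.of fun p q => ∏ i, ρ (p.1 i, p.2 i) (q.1 i, q.2 i)

/-- Regularization `lim_{k → ∞} f k / k`. -/
def regularize (f : ℕ → ℝ) : ℝ :=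
  limUnder atTop fun k : ℕ => f k / k

/-- Entanglement cost: the regularized entanglement of formation. -/
def entCost {A B : Type*} [Fintype A] [DecidableEq A] [Fintype B] [DecidableEq B]
    (ρ : Matrix (A × B) (A × B) ℂ) : ℝ :=
  regularize fun k => eof (pow ρ k)

/-- Regularized quantum discord. -/
def regDiscord {A B : Type*} [Fintype A] [DecidableEq A] [Fintype B] [DecidableEq B]
    (ρ : Matrix (A × B) (A × B) ℂ) : ℝ :=
  regularize fun k => discord (pow ρ k)

/-- An LOCC (modelled as separable-Kraus) quantum channel between bipartite systems:
all Kraus operators are of local product form. -/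
def IsLOCCChannel {A B : Type*} [Fintype A] [DecidableEq A] [Fintype B] [DecidableEq B]
    {a b : ℕ} (Λ : Matrix (A × B) (A × B) ℂ → Matrix (Fin a × Fin b) (Fin a × Fin b) ℂ) :
    Prop :=
  ∃ (m : ℕ) (L : Fin m → Matrix (Fin a) A ℂ) (R : Fin m → Matrix (Fin b) B ℂ),
    (∑ k, (L k ⊗ₖ R k)ᴴ * (L k ⊗ₖ R k) = 1) ∧
    ∀ ρ, Λ ρ = ∑ k, (L k ⊗ₖ R k) * ρ * (L k ⊗ₖ R k)ᴴ

/-- Distillable entanglement: the regularized coherent information optimized over LOCC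
operations on the copies. -/
def distEnt {A B : Type*} [Fintype A] [DecidableEq A] [Fintype B] [DecidableEq B]
    (ρ : Matrix (A × B) (A × B) ℂ) : ℝ :=
  limUnder atTop fun k : ℕ =>
    (sSup { r | ∃ (a b : ℕ)
        (Λ : Matrix ((Fin k → A) × (Fin k → B)) ((Fin k → A) × (Fin k → B)) ℂ →
          Matrix (Fin a × Fin b) (Fin a × Fin b) ℂ),
        IsLOCCChannel Λ ∧ r = cohInfo (Λ (pow ρ k)) }) / k

/-! ### Orthonormal families, dephasings, relative entropy -/

/-- A family of vectors is orthonormal. -/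
def OrthonormalFam {ι n : Type*} [Fintype n] [DecidableEq ι] (v : ι → n → ℂ) : Prop :=
  ∀ i j, (∑ x, star (v i x) * v j x) = if i = j then (1 : ℂ) else 0

/-- The Hermitian functional calculus of `log₂` (with the convention `log₂ 0 = 0`),
used to define `Tr[ρ log₂ σ]`. -/
def hermLog {n : Type*} [Fintype n] [DecidableEq n] (M : Matrix n n ℂ) : Matrix n n ℂ :=
  if h : M.IsHermitian then
    (h.eigenvectorUnitary : Matrix n n ℂ) *
      Matrix.diagonal (fun i => (Real.logb 2 (h.eigenvalues i) : ℂ)) *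
      (star (h.eigenvectorUnitary : Matrix n n ℂ))
  else 0

/-- Quantum relative entropy `S(ρ‖σ) = Tr[ρ log₂ ρ - ρ log₂ σ]`. -/
def relEnt {n : Type*} [Fintype n] [DecidableEq n] (ρ σ : Matrix n n ℂ) : ℝ :=
  ((ρ * hermLog ρ - ρ * hermLog σ).trace).re

/-- Local dephasing of the second subsystem in the orthonormal basis `e`. -/
def dephB {A B : Type*} [Fintype A] [DecidableEq A] [Fintype B] [DecidableEq B]
    (e : B → B → ℂ) (ρ : Matrix (A × B) (A × B) ℂ) : Matrix (A × B) (A × B) ℂ :=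
  ∑ k, ((1 : Matrix A A ℂ) ⊗ₖ proj (e k)) * ρ * ((1 : Matrix A A ℂ) ⊗ₖ proj (e k))

/-- Local dephasing of both subsystems in the orthonormal bases `a` and `b`. -/
def dephAB {A B : Type*} [Fintype A] [DecidableEq A] [Fintype B] [DecidableEq B]
    (a : A → A → ℂ) (b : B → B → ℂ) (ρ : Matrix (A × B) (A × B) ℂ) :
    Matrix (A × B) (A × B) ℂ :=
  ∑ k, ∑ l, (proj (a k) ⊗ₖ proj (b l)) * ρ * (proj (a k) ⊗ₖ proj (b l))

/-- One-way work deficit: minimum entropy production over complete local dephasings of `B`. -/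
def oneWayDeficit {A B : Type*} [Fintype A] [DecidableEq A] [Fintype B] [DecidableEq B]
    (ρ : Matrix (A × B) (A × B) ℂ) : ℝ :=
  sInf { r | ∃ e : B → B → ℂ, OrthonormalFam e ∧ r = entropy (dephB e ρ) - entropy ρ }

/-- Zero-way work deficit: minimum entropy production over complete local dephasings of
both subsystems. -/
def zeroWayDeficit {A B : Type*} [Fintype A] [DecidableEq A] [Fintype B] [DecidableEq B]
    (ρ : Matrix (A × B) (A × B) ℂ) : ℝ :=
  sInf { r | ∃ (a : A → A → ℂ) (b : B → B → ℂ), OrthonormalFam a ∧ OrthonormalFam b ∧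
    r = entropy (dephAB a b ρ) - entropy ρ }

/-- Quantum-classical states `∑ₖ pₖ ρₖ ⊗ |eₖ⟩⟨eₖ|`. -/
def IsQCState {A B : Type*} [Fintype A] [Fintype B] [DecidableEq B]
    (σ : Matrix (A × B) (A × B) ℂ) : Prop :=
  ∃ (e : B → B → ℂ) (p : B → ℝ) (ρk : B → Matrix A A ℂ),
    OrthonormalFam e ∧ (∀ k, 0 ≤ p k) ∧ (∑ k, p k = 1) ∧
    (∀ k, IsDensityMatrix (ρk k)) ∧ σ = ∑ k, (p k : ℂ) • (ρk k ⊗ₖ proj (e k))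

/-- Classical-classical (strictly classically correlated) states
`∑ₖⱼ p_{kj} |aₖ⟩⟨aₖ| ⊗ |bⱼ⟩⟨bⱼ|`. -/
def IsCCState {A B : Type*} [Fintype A] [DecidableEq A] [Fintype B] [DecidableEq B]
    (ρ : Matrix (A × B) (A × B) ℂ) : Prop :=
  ∃ (a : A → A → ℂ) (b : B → B → ℂ) (p : A → B → ℝ),
    OrthonormalFam a ∧ OrthonormalFam b ∧ (∀ k j, 0 ≤ p k j) ∧
    (∑ k, ∑ j, p k j) = 1 ∧
    ρ = ∑ k, ∑ j, (p k j : ℂ) • proj (tensorVec (a k) (b j))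

/-- Relative entropy of quantumness w.r.t. quantum-classical states. -/
def relEntQuantumnessQC {A B : Type*} [Fintype A] [DecidableEq A] [Fintype B] [DecidableEq B]
    (ρ : Matrix (A × B) (A × B) ℂ) : ℝ :=
  sInf { r | ∃ σ : Matrix (A × B) (A × B) ℂ, IsQCState σ ∧ r = relEnt ρ σ }

/-- Relative entropy of quantumness w.r.t. classical-classical states. -/
def relEntQuantumnessCC {A B : Type*} [Fintype A] [DecidableEq A] [Fintype B] [DecidableEq B]
    (ρ : Matrix (A × B) (A × B) ℂ) : ℝ :=
  sInf { r | ∃ σ : Matrix (A × B) (A × B) ℂ, IsCCState σ ∧ r = relEnt ρ σ }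

/-- Relative entropy of entanglement: minimal relative entropy to a separable state. -/
def relEntEntanglement {A B : Type*} [Fintype A] [DecidableEq A] [Fintype B] [DecidableEq B]
    (ρ : Matrix (A × B) (A × B) ℂ) : ℝ :=
  sInf { r | ∃ σ : Matrix (A × B) (A × B) ℂ, IsSeparable σ ∧ r = relEnt ρ σ }

/-! ### The activation protocol -/

/-- The reference vector `|0⟩`. -/
def ket0 (a : ℕ) [NeZero a] : Fin a → ℂ := fun i => if i = 0 then 1 else 0

/-- The generalized CNOT (copy) gate `|k⟩|m⟩ ↦ |k⟩|m + k⟩` on `Fin a × Fin a`. -/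
def cnot (a : ℕ) : Matrix (Fin a × Fin a) (Fin a × Fin a) ℂ :=
  Matrix.of fun p q => if p.1 = q.1 ∧ p.2 = q.2 + q.1 then 1 else 0

/-- The tensor product `U_{A:M_A} ⊗ U_{B:M_B}` of two two-party operators, with the
global tensor factors grouped as `(A × B) × (M_A × M_B)` (system : apparatus). -/
def pairKron {α α' β β' : Type*} (UA : Matrix (α × α') (α × α') ℂ)
    (UB : Matrix (β × β') (β × β') ℂ) :
    Matrix ((α × β) × (α' × β')) ((α × β) × (α' × β')) ℂ :=
  Matrix.of fun p q => UA (p.1.1, p.2.1) (q.1.1, q.2.1) * UB (p.1.2, p.2.2) (q.1.2, q.2.2)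

/-- A measurement-interaction unitary on system ⊗ apparatus, acting as
`|k⟩|0⟩ ↦ |k⟩|k⟩` on some orthonormal basis `e` (the copies `f k` being orthonormal). -/
def IsCopyUnitary {n : Type*} [Fintype n] [DecidableEq n]
    (U : Matrix (n × n) (n × n) ℂ) (ref : n → ℂ) : Prop :=
  U ∈ Matrix.unitaryGroup (n × n) ℂ ∧
  ∃ e f : n → n → ℂ, OrthonormalFam e ∧ OrthonormalFam f ∧
    ∀ k, U.mulVec (tensorVec (e k) ref) = tensorVec (e k) (f k)

/-- The interaction unitary of the activation protocol,
`U_{S:M} = C_{S:M} (U_S ⊗ 1_M)` with `U_S = U_A ⊗ U_B`. -/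
def activationUnitary {a b : ℕ} (UA : Matrix (Fin a) (Fin a) ℂ)
    (UB : Matrix (Fin b) (Fin b) ℂ) :
    Matrix ((Fin a × Fin b) × (Fin a × Fin b)) ((Fin a × Fin b) × (Fin a × Fin b)) ℂ :=
  pairKron (cnot a) (cnot b) *
    ((UA ⊗ₖ UB) ⊗ₖ (1 : Matrix (Fin a × Fin b) (Fin a × Fin b) ℂ))

/-- The post-interaction system : apparatus state
`ρ̃_{S:M} = U_{S:M} (ρ_S ⊗ |0⟩⟨0|_M) U_{S:M}†` of the activation protocol. -/
def activatedState {a b : ℕ} [NeZero a] [NeZero b] (UA : Matrix (Fin a) (Fin a) ℂ)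
    (UB : Matrix (Fin b) (Fin b) ℂ) (ρ : Matrix (Fin a × Fin b) (Fin a × Fin b) ℂ) :
    Matrix ((Fin a × Fin b) × (Fin a × Fin b)) ((Fin a × Fin b) × (Fin a × Fin b)) ℂ :=
  activationUnitary UA UB * (ρ ⊗ₖ proj (tensorVec (ket0 a) (ket0 b))) *
    (activationUnitary UA UB)ᴴ

/-- Regroup a `(Fin a × Fin b) × (Fin a × Fin b)` matrix as a
`Fin (a*b) × Fin (a*b)` bipartite matrix. -/
def reindexSM {a b : ℕ} (ρ : Matrix ((Fin a × Fin b) × (Fin a × Fin b))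
    ((Fin a × Fin b) × (Fin a × Fin b)) ℂ) :
    Matrix (Fin (a * b) × Fin (a * b)) (Fin (a * b) × Fin (a * b)) ℂ :=
  Matrix.reindex (Equiv.prodCongr finProdFinEquiv finProdFinEquiv)
    (Equiv.prodCongr finProdFinEquiv finProdFinEquiv) ρ

/-- A maximally correlated state `∑_{ij} c_{ij} |i⟩⟨j| ⊗ |i⟩⟨j|`. -/
def maxCorr {n : Type*} [Fintype n] [DecidableEq n] (c : n → n → ℂ) :
    Matrix (n × n) (n × n) ℂ :=
  Matrix.of fun p q => if p.1 = p.2 ∧ q.1 = q.2 then c p.1 q.1 else 0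

/-! ### CLOCC operations -/

/-- The closed set of local operations and classical communication, generated by local
unitaries, local dephasings, addition of local pure ancillas, communication of a
(dephased) subsystem, and relabellings. -/
inductive CLOCC :
    ∀ (A B A' B' : Type), (Matrix (A × B) (A × B) ℂ → Matrix (A' × B') (A' × B') ℂ) → Prop
  | localUnitary {A B : Type} [Fintype A] [DecidableEq A] [Fintype B] [DecidableEq B]
      (UA : Matrix A A ℂ) (UB : Matrix B B ℂ)
      (_ : UA ∈ Matrix.unitaryGroup A ℂ) (_ : UB ∈ Matrix.unitaryGroup B ℂ) :
      CLOCC A B A B fun ρ => (UA ⊗ₖ UB) * ρ * (UA ⊗ₖ UB)ᴴ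
  | dephasingA {A B : Type} [Fintype A] [DecidableEq A] [Fintype B] [DecidableEq B]
      (e : A → A → ℂ) (_ : OrthonormalFam e) :
      CLOCC A B A B fun ρ =>
        ∑ k, (proj (e k) ⊗ₖ (1 : Matrix B B ℂ)) * ρ * (proj (e k) ⊗ₖ (1 : Matrix B B ℂ))
  | dephasingB {A B : Type} [Fintype A] [DecidableEq A] [Fintype B] [DecidableEq B]
      (e : B → B → ℂ) (_ : OrthonormalFam e) :
      CLOCC A B A B fun ρ =>
        ∑ k, ((1 : Matrix A A ℂ) ⊗ₖ proj (e k)) * ρ * ((1 : Matrix A A ℂ) ⊗ₖ proj (e k))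
  | ancillaA {A B C : Type} [Fintype C] (v : C → ℂ) (_ : UnitVec v) :
      CLOCC A B (A × C) B fun ρ =>
        Matrix.of fun p q => ρ (p.1.1, p.2) (q.1.1, q.2) * (v p.1.2 * star (v q.1.2))
  | ancillaB {A B C : Type} [Fintype C] (v : C → ℂ) (_ : UnitVec v) :
      CLOCC A B A (B × C) fun ρ =>
        Matrix.of fun p q => ρ (p.1, p.2.1) (q.1, q.2.1) * (v p.2.2 * star (v q.2.2))
  | commBtoA {A B₁ B₂ : Type} [Fintype A] [DecidableEq A] [Fintype B₁] [DecidableEq B₁]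
      [Fintype B₂] [DecidableEq B₂] (e : B₂ → B₂ → ℂ) (_ : OrthonormalFam e) :
      CLOCC A (B₁ × B₂) (A × B₂) B₁ fun ρ => Matrix.of fun p q =>
        (∑ k, ((1 : Matrix A A ℂ) ⊗ₖ ((1 : Matrix B₁ B₁ ℂ) ⊗ₖ proj (e k))) * ρ *
            ((1 : Matrix A A ℂ) ⊗ₖ ((1 : Matrix B₁ B₁ ℂ) ⊗ₖ proj (e k))))
          (p.1.1, (p.2, p.1.2)) (q.1.1, (q.2, q.1.2))
  | commAtoB {A₁ A₂ B : Type} [Fintype A₁] [DecidableEq A₁] [Fintype A₂] [DecidableEq A₂]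
      [Fintype B] [DecidableEq B] (e : A₂ → A₂ → ℂ) (_ : OrthonormalFam e) :
      CLOCC (A₁ × A₂) B A₁ (B × A₂) fun ρ => Matrix.of fun p q =>
        (∑ k, (((1 : Matrix A₁ A₁ ℂ) ⊗ₖ proj (e k)) ⊗ₖ (1 : Matrix B B ℂ)) * ρ *
            (((1 : Matrix A₁ A₁ ℂ) ⊗ₖ proj (e k)) ⊗ₖ (1 : Matrix B B ℂ)))
          ((p.1, p.2.2), p.2.1) ((q.1, q.2.2), q.2.1)
  | relabel {A B A' B' : Type} (eA : A ≃ A') (eB : B ≃ B') :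
      CLOCC A B A' B' fun ρ =>
        Matrix.reindex (Equiv.prodCongr eA eB) (Equiv.prodCongr eA eB) ρ
  | comp {A B C D E F : Type}
      {Λ : Matrix (A × B) (A × B) ℂ → Matrix (C × D) (C × D) ℂ}
      {Γ : Matrix (C × D) (C × D) ℂ → Matrix (E × F) (E × F) ℂ} :
      CLOCC A B C D Λ → CLOCC C D E F Γ → CLOCC A B E F (Γ ∘ Λ)

/-- The work deficit `Δ(ρ_AB) = inf_{Γ ∈ CLOCC} S(Γ[ρ_AB]) - S(ρ_AB)`. -/
def workDeficit {A B : Type} [Fintype A] [DecidableEq A] [Fintype B] [DecidableEq B]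
    (ρ : Matrix (A × B) (A × B) ℂ) : ℝ :=
  sInf { r | ∃ (a' b' : ℕ)
    (Γ : Matrix (A × B) (A × B) ℂ → Matrix (Fin a' × Fin b') (Fin a' × Fin b') ℂ),
    CLOCC A B (Fin a') (Fin b') Γ ∧ r = entropy (Γ ρ) - entropy ρ }

/-! ### Channels acting on one side -/

/-- The ampliation `id_A ⊗ Φ` of a map `Φ` on the second tensor factor. -/
def ampliate {A B B' : Type*} [Fintype B] (Φ : Matrix B B ℂ → Matrix B' B' ℂ)
    (ρ : Matrix (A × B) (A × B) ℂ) : Matrix (A × B') (A × B') ℂ :=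
  Matrix.of fun p q => Φ (Matrix.of fun b b' => ρ (p.1, b) (q.1, b')) p.2 q.2

/-- The isometric embedding `V = 1_Γ ⊗ |0⟩ : C_Γ → C_Γ ⊗ C_E`. -/
def embed {Γ : Type*} [DecidableEq Γ] (e : ℕ) : Matrix (Γ × Fin (e + 1)) Γ ℂ :=
  Matrix.of fun p g => if p.1 = g ∧ p.2 = 0 then 1 else 0

/-! ### Auxiliary development for the monogamy inequality -/

section Aux

open Matrix Polynomial

/-- The function `η x = -x log₂ x`. -/
def eta (x : ℝ) : ℝ := -(x * Real.logb 2 x)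

lemma eta_eq (x : ℝ) : eta x = Real.negMulLog x * (Real.log 2)⁻¹ := by
  simp [eta, Real.negMulLog, Real.logb, div_eq_mul_inv]; ring

lemma eta_zero : eta 0 = 0 := by simp [eta]

lemma eta_one : eta 1 = 0 := by simp [eta]

lemma concaveOn_eta : ConcaveOn ℝ (Set.Ici 0) eta := by
  have h := Real.concaveOn_negMulLog.smul (c := (Real.log 2)⁻¹)
    (by positivity)
  suffices e : eta = fun x : ℝ => (Real.log 2)⁻¹ • x.negMulLog by rw [e]; exact h
  funext x
  rw [eta_eq]
  simp [mul_comm]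

lemma eta_mul (a b : ℝ) : eta (a * b) = a * eta b + b * eta a := by
  rcases eq_or_ne a 0 with ha | ha
  · simp [ha, eta_zero, eta]
  rcases eq_or_ne b 0 with hb | hb
  · simp [hb, eta_zero, eta]
  rw [eta, eta, eta, Real.logb, Real.logb, Real.logb, Real.log_mul ha hb]
  ring

lemma eta_nonneg {x : ℝ} (h0 : 0 ≤ x) (h1 : x ≤ 1) : 0 ≤ eta x := by
  rw [eta, neg_nonneg]
  exact mul_nonpos_of_nonneg_of_nonpos h0 (Real.logb_nonpos one_lt_two h0 h1)

variable {n : Type*} [Fintype n] [DecidableEq n]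

lemma charpoly_diagonal (v : n → ℂ) :
    (Matrix.diagonal v).charpoly = ∏ i, (X - C (v i)) := by
  have h : charmatrix (Matrix.diagonal v) = Matrix.diagonal (fun i => X - C (v i)) := by
    ext i j
    by_cases h : i = j
    · subst h; simp [Matrix.charmatrix_apply_eq]
    · simp [Matrix.charmatrix_apply_ne _ _ _ h, Matrix.diagonal_apply_ne _ h]
  rw [Matrix.charpoly, h, Matrix.det_diagonal]

lemma charpoly_unitary_conj {U : Matrix n n ℂ} (hU : U ∈ Matrix.unitaryGroup n ℂ)
    (D : Matrix n n ℂ) : (U * D * star U).charpoly = D.charpoly := by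
  have key : charmatrix (U * D * star U) =
      (U.map C) * charmatrix D * ((star U).map C) := by
    rw [charmatrix, charmatrix]
    have h1 : (Matrix.scalar n (X : ℂ[X])) = (X : ℂ[X]) • (1 : Matrix n n ℂ[X]) := by
      simp [Matrix.scalar, Matrix.smul_one_eq_diagonal]
    rw [mul_sub, sub_mul]
    congr 1
    · rw [h1, mul_smul_comm, smul_mul_assoc, mul_one, ← Matrix.map_mul,
        Matrix.mem_unitaryGroup_iff.mp hU]
      simp
    · simp only [RingHom.mapMatrix_apply]
      rw [← Matrix.map_mul, ← Matrix.map_mul]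
  rw [Matrix.charpoly, Matrix.charpoly, key, Matrix.det_mul, Matrix.det_mul]
  rw [mul_comm ((U.map C).det * _)]
  rw [← mul_assoc, ← Matrix.det_mul, ← Matrix.map_mul, Matrix.mem_unitaryGroup_iff'.mp hU]
  simp

/-- Multiset of eigenvalues of a Hermitian matrix equals the multiset of diagonal
entries of any unitary diagonalization. -/
lemma eigenvalues_multiset_eq {M : Matrix n n ℂ} (hM : M.IsHermitian)
    {U : Matrix n n ℂ} (hU : U ∈ Matrix.unitaryGroup n ℂ) (d : n → ℝ)
    (hMd : M = U * Matrix.diagonal (fun i => (d i : ℂ)) * star U) :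
    Finset.univ.val.map hM.eigenvalues = Finset.univ.val.map d := by
  have h1 : M.charpoly = ∏ i, (X - C ((d i : ℂ))) := by
    rw [hMd, charpoly_unitary_conj hU, charpoly_diagonal]
  have h2 : M.charpoly = ∏ i, (X - C ((hM.eigenvalues i : ℂ))) := by
    have hs := hM.spectral_theorem
    have hU2 : (hM.eigenvectorUnitary : Matrix n n ℂ) ∈ Matrix.unitaryGroup n ℂ :=
      hM.eigenvectorUnitary.2
    have : M = (hM.eigenvectorUnitary : Matrix n n ℂ) *
        Matrix.diagonal (fun i => ((hM.eigenvalues i : ℝ) : ℂ)) *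
        star (hM.eigenvectorUnitary : Matrix n n ℂ) := by
      convert hs using 2
      rfl
    conv_lhs => rw [this]
    rw [charpoly_unitary_conj hU2, charpoly_diagonal]
  have h3 : ((Finset.univ.val.map (fun i => ((hM.eigenvalues i : ℝ) : ℂ))).map
      (fun a => X - C a)).prod =
      ((Finset.univ.val.map (fun i => ((d i : ℝ) : ℂ))).map (fun a => X - C a)).prod := by
    rw [Multiset.map_map, Multiset.map_map]
    have e1 : ((Finset.univ.val.map (fun i => X - C ((hM.eigenvalues i : ℝ) : ℂ)))).prod
        = ∏ i, (X - C ((hM.eigenvalues i : ℂ))) := (Finset.prod_eq_multiset_prod _ _).symm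
    have e2 : ((Finset.univ.val.map (fun i => X - C ((d i : ℝ) : ℂ)))).prod
        = ∏ i, (X - C ((d i : ℂ))) := (Finset.prod_eq_multiset_prod _ _).symm
    simp only [Function.comp_def]
    rw [e1, e2, ← h1, ← h2]
  have h4 : Finset.univ.val.map (fun i => ((hM.eigenvalues i : ℝ) : ℂ)) =
      Finset.univ.val.map (fun i => ((d i : ℝ) : ℂ)) := by
    calc Finset.univ.val.map (fun i => ((hM.eigenvalues i : ℝ) : ℂ))
        = ((Finset.univ.val.map (fun i => ((hM.eigenvalues i : ℝ) : ℂ))).map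
            (fun a => X - C a)).prod.roots := (Polynomial.roots_multiset_prod_X_sub_C _).symm
      _ = ((Finset.univ.val.map (fun i => ((d i : ℝ) : ℂ))).map
            (fun a => X - C a)).prod.roots := by rw [h3]
      _ = Finset.univ.val.map (fun i => ((d i : ℝ) : ℂ)) :=
          Polynomial.roots_multiset_prod_X_sub_C _
  have h5 : (Finset.univ.val.map hM.eigenvalues).map (fun x : ℝ => (x : ℂ)) =
      (Finset.univ.val.map d).map (fun x : ℝ => (x : ℂ)) := by
    rw [Multiset.map_map, Multiset.map_map]
    exact h4
  exact Multiset.map_injective Complex.ofReal_injective h5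

lemma sum_eigenvalues_eq {M : Matrix n n ℂ} (hM : M.IsHermitian)
    {U : Matrix n n ℂ} (hU : U ∈ Matrix.unitaryGroup n ℂ) (d : n → ℝ)
    (hMd : M = U * Matrix.diagonal (fun i => (d i : ℂ)) * star U) (g : ℝ → ℝ) :
    ∑ i, g (hM.eigenvalues i) = ∑ i, g (d i) := by
  calc ∑ i, g (hM.eigenvalues i)
      = ((Finset.univ.val.map hM.eigenvalues).map g).sum := by
        rw [Multiset.map_map, Finset.sum_eq_multiset_sum]; rfl
    _ = ((Finset.univ.val.map d).map g).sum := by rw [eigenvalues_multiset_eq hM hU d hMd]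
    _ = ∑ i, g (d i) := by rw [Multiset.map_map, Finset.sum_eq_multiset_sum]; rfl

/-- Entropy computed from any unitary diagonalization. -/
lemma entropy_eq_of_diag {M : Matrix n n ℂ} {U : Matrix n n ℂ}
    (hU : U ∈ Matrix.unitaryGroup n ℂ) (d : n → ℝ)
    (hMd : M = U * Matrix.diagonal (fun i => (d i : ℂ)) * star U) :
    entropy M = ∑ i, eta (d i) := by
  have hD : (Matrix.diagonal fun i => ((d i : ℝ) : ℂ)).IsHermitian :=
    Matrix.isHermitian_diagonal_of_self_adjoint _ (by
      funext i
      simp [_root_.IsSelfAdjoint, Complex.conj_ofReal])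
  have hM : M.IsHermitian := by
    rw [hMd, Matrix.star_eq_conjTranspose]
    exact Matrix.isHermitian_mul_mul_conjTranspose U hD
  rw [entropy, dif_pos hM]
  have h := sum_eigenvalues_eq hM hU d hMd (fun x => x * Real.logb 2 x)
  rw [h]
  simp only [eta, ← Finset.sum_neg_distrib]

lemma entropy_eq_sum_eta {M : Matrix n n ℂ} (hM : M.IsHermitian) :
    entropy M = ∑ i, eta (hM.eigenvalues i) := by
  rw [entropy, dif_pos hM]
  simp only [eta, ← Finset.sum_neg_distrib]

lemma unitVec_col {U : Matrix n n ℂ} (hU : U ∈ Matrix.unitaryGroup n ℂ) (i : n) :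
    UnitVec (fun a => U a i) := by
  have h := Matrix.mem_unitaryGroup_iff'.mp hU
  have h2 : (star U * U) i i = 1 := by rw [h]; simp
  rw [Matrix.mul_apply] at h2
  simpa [Matrix.star_apply, UnitVec] using h2

lemma unitary_diag_eq_sum_proj (U : Matrix n n ℂ) (d : n → ℝ) :
    U * Matrix.diagonal (fun i => (d i : ℂ)) * star U
      = ∑ i, (d i : ℂ) • proj (fun a => U a i) := by
  ext a b
  rw [Matrix.mul_apply]
  simp only [Matrix.mul_apply, Matrix.diagonal_apply, Matrix.sum_apply, Matrix.smul_apply,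
    proj, Matrix.of_apply, Matrix.star_apply, smul_eq_mul, mul_ite, mul_zero, ite_mul, zero_mul,
    Finset.sum_ite_eq, Finset.sum_ite_eq', Finset.mem_univ, if_true]
  refine Finset.sum_congr rfl fun j _ => ?_
  ring

lemma sum_proj_col {U : Matrix n n ℂ} (hU : U ∈ Matrix.unitaryGroup n ℂ) :
    ∑ i, proj (fun a => U a i) = (1 : Matrix n n ℂ) := by
  have h := Matrix.mem_unitaryGroup_iff.mp hU
  ext a b
  rw [← h, Matrix.mul_apply]
  simp [proj, Matrix.sum_apply, Matrix.star_apply]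

lemma diag_re_nonneg {N : Matrix n n ℂ} (hN : N.PosSemidef) (j : n) :
    0 ≤ (N j j).re := by
  have h := hN.dotProduct_mulVec_nonneg (Pi.single j 1)
  have he : dotProduct (star (Pi.single j (1:ℂ))) (N *ᵥ Pi.single j 1) = N j j := by
    simp [dotProduct, Matrix.mulVec, Pi.single_apply, apply_ite]
  rw [he] at h
  exact (Complex.le_def.mp h).1

lemma herm_diag_coe {N : Matrix n n ℂ} (hN : N.IsHermitian) (j : n) :
    (((N j j).re : ℝ) : ℂ) = N j j := by
  have h : (starRingEnd ℂ) (N j j) = N j j := by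
    conv_rhs => rw [← hN]
    simp [Matrix.conjTranspose_apply]
  exact Complex.conj_eq_iff_re.mp h

lemma herm_trace_coe {N : Matrix n n ℂ} (hN : N.IsHermitian) :
    (((N.trace).re : ℝ) : ℂ) = N.trace := by
  rw [Matrix.trace]
  rw [Complex.re_sum]
  push_cast
  refine Finset.sum_congr rfl fun j _ => ?_
  exact herm_diag_coe hN j

lemma sum_mulVec' {ι : Type*} [Fintype ι] (A : ι → Matrix n n ℂ) (x : n → ℂ) :
    (∑ k, A k) *ᵥ x = ∑ k, (A k) *ᵥ x := by
  ext j
  simp only [Matrix.mulVec, dotProduct, Finset.sum_apply, Matrix.sum_apply,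
    Finset.sum_mul]
  rw [Finset.sum_comm]

lemma dotProduct_sum' {ι : Type*} [Fintype ι] (u : n → ℂ) (v : ι → n → ℂ) :
    dotProduct u (∑ k, v k) = ∑ k, dotProduct u (v k) := by
  simp only [dotProduct, Finset.sum_apply, Finset.mul_sum]
  rw [Finset.sum_comm]

lemma posSemidef_sum_smul {ι : Type*} [Fintype ι] (p : ι → ℝ) (hp : ∀ k, 0 ≤ p k)
    (τ : ι → Matrix n n ℂ) (hτ : ∀ k, (τ k).PosSemidef) :
    (∑ k, (p k : ℂ) • τ k).PosSemidef := by
  refine Matrix.PosSemidef.of_dotProduct_mulVec_nonneg ?_ ?_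
  · rw [Matrix.IsHermitian, Matrix.conjTranspose_sum]
    refine Finset.sum_congr rfl fun k _ => ?_
    rw [Matrix.conjTranspose_smul, (hτ k).1]
    congr 1
    simp
  · intro x
    rw [sum_mulVec', dotProduct_sum']
    refine Finset.sum_nonneg fun k _ => ?_
    rw [Matrix.smul_mulVec, dotProduct_smul]
    refine smul_nonneg ?_ ((hτ k).dotProduct_mulVec_nonneg x)
    exact_mod_cast hp k

lemma trace_eq_sum_eigenvalues' {M : Matrix n n ℂ} (hM : M.IsHermitian) :
    M.trace = ((∑ i, hM.eigenvalues i : ℝ) : ℂ) := by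
  have hs : M = (hM.eigenvectorUnitary : Matrix n n ℂ) *
      Matrix.diagonal (fun i => ((hM.eigenvalues i : ℝ) : ℂ)) *
      star (hM.eigenvectorUnitary : Matrix n n ℂ) := by
    convert hM.spectral_theorem using 2
    rfl
  conv_lhs => rw [hs]
  rw [Matrix.trace_mul_cycle,
    Matrix.mem_unitaryGroup_iff'.mp hM.eigenvectorUnitary.2, one_mul, Matrix.trace_diagonal]
  push_cast
  rfl

/-- Spectral pure-state ensemble of a PSD matrix. -/
lemma spectral_ensemble {τ : Matrix n n ℂ} (hτ : τ.PosSemidef) :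
    ∃ (μ : n → ℝ) (w : n → n → ℂ),
      (∀ i, 0 ≤ μ i) ∧ (∀ i, UnitVec (w i)) ∧
      τ = ∑ i, (μ i : ℂ) • proj (w i) ∧
      τ.trace = ((∑ i, μ i : ℝ) : ℂ) ∧
      entropy τ = ∑ i, eta (μ i) := by
  have h := hτ.1
  have hU : (h.eigenvectorUnitary : Matrix n n ℂ) ∈ Matrix.unitaryGroup n ℂ :=
    h.eigenvectorUnitary.2
  have hs : τ = (h.eigenvectorUnitary : Matrix n n ℂ) *
      Matrix.diagonal (fun i => ((h.eigenvalues i : ℝ) : ℂ)) *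
      star (h.eigenvectorUnitary : Matrix n n ℂ) := by
    convert h.spectral_theorem using 2
    rfl
  refine ⟨h.eigenvalues, fun i a => (h.eigenvectorUnitary : Matrix n n ℂ) a i,
    fun i => hτ.eigenvalues_nonneg i,
    fun i => unitVec_col hU i,
    ?_, trace_eq_sum_eigenvalues' h, entropy_eq_of_diag hU _ hs⟩
  conv_lhs => rw [hs]
  exact unitary_diag_eq_sum_proj _ _

/-- Schur-type lemma: entropy is at most the `η`-sum of the diagonal in any basis. -/
lemma eta_jensen {ι : Type*} [Fintype ι] (w : ι → ℝ) (x : ι → ℝ) (h0 : ∀ i, 0 ≤ w i)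
    (h1 : ∑ i, w i = 1) (hx : ∀ i, 0 ≤ x i) :
    ∑ i, w i * eta (x i) ≤ eta (∑ i, w i * x i) := by
  have := concaveOn_eta.le_map_sum (fun i (_ : i ∈ Finset.univ) => h0 i) h1
    (fun i (_ : i ∈ Finset.univ) => hx i)
  simpa [smul_eq_mul] using this

lemma entropy_le_sum_eta_diag {τ : Matrix n n ℂ} (hτ : τ.PosSemidef)
    {V : Matrix n n ℂ} (hV : V ∈ Matrix.unitaryGroup n ℂ) :
    entropy τ ≤ ∑ j, eta (((star V * τ * V) j j).re) := by
  have h := hτ.1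
  have hWu : (h.eigenvectorUnitary : Matrix n n ℂ) ∈ Matrix.unitaryGroup n ℂ :=
    h.eigenvectorUnitary.2
  set W : Matrix n n ℂ := (h.eigenvectorUnitary : Matrix n n ℂ) with hW
  have hs : τ = W * Matrix.diagonal (fun i => ((h.eigenvalues i : ℝ) : ℂ)) * star W := by
    convert h.spectral_theorem using 2
    rfl
  set S : Matrix n n ℂ := star V * W with hS
  have hSu : S ∈ Matrix.unitaryGroup n ℂ := by
    rw [Matrix.mem_unitaryGroup_iff']
    rw [hS, StarMul.star_mul, star_star]
    calc (star W * V) * (star V * W) = star W * (V * star V) * W := by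
          simp only [Matrix.mul_assoc]
      _ = star W * W := by rw [Matrix.mem_unitaryGroup_iff.mp hV, mul_one]
      _ = 1 := Matrix.mem_unitaryGroup_iff'.mp hWu
  have hform : star V * τ * V = S * Matrix.diagonal
      (fun i => ((h.eigenvalues i : ℝ) : ℂ)) * star S := by
    rw [hS, StarMul.star_mul, star_star]
    conv_lhs => rw [hs]
    simp only [Matrix.mul_assoc]
  set B : n → n → ℝ := fun j i => Complex.normSq (S j i) with hB
  have hB0 : ∀ j i, 0 ≤ B j i := fun j i => Complex.normSq_nonneg _
  have key : ∀ j, ((star V * τ * V) j j).re = ∑ i, B j i * h.eigenvalues i := by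
    intro j
    rw [hform, unitary_diag_eq_sum_proj]
    rw [Matrix.sum_apply]
    rw [Complex.re_sum]
    refine Finset.sum_congr rfl fun i _ => ?_
    simp only [Matrix.smul_apply, proj, Matrix.of_apply, smul_eq_mul]
    have : S j i * star (S j i) = ((Complex.normSq (S j i) : ℝ) : ℂ) := by
      rw [mul_comm, Complex.star_def]
      exact Complex.normSq_eq_conj_mul_self.symm
    rw [this]
    rw [← Complex.ofReal_mul]
    rw [Complex.ofReal_re]
    ring
  have hrow : ∀ j, ∑ i, B j i = 1 := by
    intro j
    have h1 : (S * star S) j j = 1 := by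
      rw [Matrix.mem_unitaryGroup_iff.mp hSu]; simp
    rw [Matrix.mul_apply] at h1
    have h2 : ∑ i, (((B j i : ℝ)) : ℂ) = 1 := by
      rw [← h1]
      refine Finset.sum_congr rfl fun i _ => ?_
      rw [Matrix.star_apply]
      show ((Complex.normSq (S j i) : ℝ) : ℂ) = S j i * star (S j i)
      rw [Complex.star_def, mul_comm]
      exact Complex.normSq_eq_conj_mul_self
    exact_mod_cast h2
  have hcol : ∀ i, ∑ j, B j i = 1 := by
    intro i
    have h1 : (star S * S) i i = 1 := by
      rw [Matrix.mem_unitaryGroup_iff'.mp hSu]; simp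
    rw [Matrix.mul_apply] at h1
    have h2 : ∑ j, (((B j i : ℝ)) : ℂ) = 1 := by
      rw [← h1]
      refine Finset.sum_congr rfl fun j _ => ?_
      rw [Matrix.star_apply]
      show ((Complex.normSq (S j i) : ℝ) : ℂ) = star (S j i) * S j i
      rw [Complex.star_def]
      exact Complex.normSq_eq_conj_mul_self
    exact_mod_cast h2
  have hlam0 : ∀ i, (0:ℝ) ≤ h.eigenvalues i := fun i => hτ.eigenvalues_nonneg i
  have jens : ∀ j, ∑ i, B j i * eta (h.eigenvalues i) ≤ eta (((star V * τ * V) j j).re) := by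
    intro j
    rw [key j]
    exact eta_jensen (B j) h.eigenvalues (hB0 j) (hrow j) hlam0
  calc entropy τ = ∑ i, eta (h.eigenvalues i) := entropy_eq_sum_eta h
    _ = ∑ i, (∑ j, B j i) * eta (h.eigenvalues i) := by
        refine Finset.sum_congr rfl fun i _ => ?_
        rw [hcol i, one_mul]
    _ = ∑ j, ∑ i, B j i * eta (h.eigenvalues i) := by
        rw [Finset.sum_comm]
        simp [Finset.sum_mul]
    _ ≤ ∑ j, eta (((star V * τ * V) j j).re) := Finset.sum_le_sum fun j _ => jens j

/-- Concavity of the von Neumann entropy. -/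
lemma sum_smul_entropy_le {ι : Type*} [Fintype ι] (p : ι → ℝ) (τ : ι → Matrix n n ℂ)
    (hp : ∀ k, 0 ≤ p k) (hps : ∑ k, p k = 1)
    (hτ : ∀ k, (τ k).PosSemidef) (htr : ∀ k, (τ k).trace = 1) :
    ∑ k, p k * entropy (τ k) ≤ entropy (∑ k, (p k : ℂ) • τ k) := by
  set ρb := ∑ k, (p k : ℂ) • τ k with hρb
  have hPSD : ρb.PosSemidef := posSemidef_sum_smul p hp τ hτ
  have h := hPSD.1
  have hU : (h.eigenvectorUnitary : Matrix n n ℂ) ∈ Matrix.unitaryGroup n ℂ :=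
    h.eigenvectorUnitary.2
  set U : Matrix n n ℂ := (h.eigenvectorUnitary : Matrix n n ℂ) with hUdef
  have hdiag : star U * ρb * U = Matrix.diagonal (RCLike.ofReal ∘ h.eigenvalues) :=
    by simpa using h.conjStarAlgAut_star_eigenvectorUnitary
  set B : ι → n → ℝ := fun k j => ((star U * τ k * U) j j).re with hB
  have hB0 : ∀ k j, 0 ≤ B k j := by
    intro k j
    refine diag_re_nonneg ?_ j
    have := (hτ k).conjTranspose_mul_mul_same (B := U)
    rwa [← Matrix.star_eq_conjTranspose] at this
  have hBsum : ∀ k, ∑ j, B k j = 1 := by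
    intro k
    have h1 : (star U * τ k * U).trace = 1 := by
      rw [Matrix.trace_mul_cycle, Matrix.mem_unitaryGroup_iff.mp hU, one_mul, htr k]
    have h2 : ∑ j, (((B k j : ℝ)) : ℂ) = 1 := by
      rw [← h1, Matrix.trace]
      refine Finset.sum_congr rfl fun j _ => ?_
      refine herm_diag_coe ?_ j
      have := ((hτ k).conjTranspose_mul_mul_same (B := U)).1
      rwa [← Matrix.star_eq_conjTranspose] at this
    exact_mod_cast h2
  have hμ : ∀ j, h.eigenvalues j = ∑ k, p k * B k j := by
    intro j
    have h1 : star U * ρb * U = ∑ k, (p k : ℂ) • (star U * τ k * U) := by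
      rw [hρb, Finset.mul_sum, Finset.sum_mul]
      refine Finset.sum_congr rfl fun k _ => ?_
      rw [Matrix.mul_smul, Matrix.smul_mul]
    have h2 := congrFun (congrFun (hdiag.symm.trans h1) j) j
    have h3 : Matrix.diagonal (RCLike.ofReal ∘ h.eigenvalues) j j =
        ((h.eigenvalues j : ℝ) : ℂ) := by simp
    rw [h3] at h2
    have h4 : ((∑ k, (p k : ℂ) • (star U * τ k * U)) : Matrix n n ℂ) j j
        = ∑ k, (p k : ℂ) * ((star U * τ k * U) j j) := by
      rw [Matrix.sum_apply]
      refine Finset.sum_congr rfl fun k _ => ?_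
      simp
    rw [h4] at h2
    have := congrArg Complex.re h2
    rw [Complex.ofReal_re, Complex.re_sum] at this
    rw [this]
    refine Finset.sum_congr rfl fun k _ => ?_
    rw [Complex.re_ofReal_mul]
  have hlam0 : ∀ j, (0:ℝ) ≤ h.eigenvalues j := fun j => hPSD.eigenvalues_nonneg j
  have jens : ∀ j, ∑ k, p k * eta (B k j) ≤ eta (h.eigenvalues j) := by
    intro j
    rw [hμ j]
    exact eta_jensen p (fun k => B k j) hp hps (fun k => hB0 k j)
  have schur : ∀ k, entropy (τ k) ≤ ∑ j, eta (B k j) :=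
    fun k => entropy_le_sum_eta_diag (hτ k) hU
  calc ∑ k, p k * entropy (τ k) ≤ ∑ k, p k * ∑ j, eta (B k j) := by
        refine Finset.sum_le_sum fun k _ => ?_
        exact mul_le_mul_of_nonneg_left (schur k) (hp k)
    _ = ∑ j, ∑ k, p k * eta (B k j) := by
        rw [Finset.sum_comm]
        simp [Finset.mul_sum]
    _ ≤ ∑ j, eta (h.eigenvalues j) := Finset.sum_le_sum fun j _ => jens j
    _ = entropy ρb := (entropy_eq_sum_eta h).symm

lemma entropy_zero : entropy (0 : Matrix n n ℂ) = 0 := by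
  have h0 : (0 : Matrix n n ℂ) = 1 * Matrix.diagonal (fun _ : n => ((0:ℝ):ℂ)) * star 1 := by
    simp
  rw [entropy_eq_of_diag (one_mem _) _ h0]
  simp [eta_zero]

lemma entropy_coe_smul {σ : Matrix n n ℂ} (hσ : σ.PosSemidef) (htr : σ.trace = 1)
    {p : ℝ} (hp : 0 ≤ p) :
    entropy ((p : ℂ) • σ) = p * entropy σ + eta p := by
  have h := hσ.1
  have hU : (h.eigenvectorUnitary : Matrix n n ℂ) ∈ Matrix.unitaryGroup n ℂ :=
    h.eigenvectorUnitary.2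
  set U : Matrix n n ℂ := (h.eigenvectorUnitary : Matrix n n ℂ) with hUdef
  have hs : σ = U * Matrix.diagonal (fun i => ((h.eigenvalues i : ℝ) : ℂ)) * star U := by
    convert h.spectral_theorem using 2
    rfl
  have hdiag2 : Matrix.diagonal (fun i => ((p * h.eigenvalues i : ℝ):ℂ)) =
      (p:ℂ) • Matrix.diagonal (fun i => ((h.eigenvalues i : ℝ):ℂ)) := by
    ext i j
    by_cases hij : i = j
    · subst hij; simp
    · simp [Matrix.diagonal_apply_ne _ hij]
  have h2 : (p:ℂ) • σ = U * Matrix.diagonal (fun i => ((p * h.eigenvalues i : ℝ):ℂ)) * star U := by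
    rw [hdiag2, mul_smul_comm, smul_mul_assoc, ← hs]
  have hsum : ∑ i, h.eigenvalues i = 1 := by
    have := trace_eq_sum_eigenvalues' h
    rw [htr] at this
    exact_mod_cast this.symm
  rw [entropy_eq_of_diag hU _ h2, entropy_eq_sum_eta h]
  simp only [eta_mul]
  rw [Finset.sum_add_distrib, ← Finset.mul_sum, ← Finset.sum_mul, hsum]
  ring

/-- Main per-block ensemble entropy bound. -/
lemma ensemble_entropy_bound {ι : Type*} [Fintype ι] (μ : ι → ℝ) (α : ι → Matrix n n ℂ)
    (hμ : ∀ i, 0 ≤ μ i) (hα : ∀ i, (α i).PosSemidef) (hαtr : ∀ i, (α i).trace = 1) :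
    ∑ i, μ i * entropy (α i) ≤ entropy (∑ i, (μ i : ℂ) • α i) - eta (∑ i, μ i) := by
  set P := ∑ i, μ i with hP
  have hP0 : 0 ≤ P := Finset.sum_nonneg (fun i _ => hμ i)
  rcases eq_or_lt_of_le hP0 with h0 | hpos
  · have hz : ∀ i ∈ Finset.univ, μ i = 0 :=
      (Finset.sum_eq_zero_iff_of_nonneg (fun i _ => hμ i)).mp h0.symm
    have hz' : ∀ i, μ i = 0 := fun i => hz i (Finset.mem_univ i)
    have hzz : (∑ i, (μ i:ℂ) • α i) = 0 := by
      simp [hz']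
    rw [hzz, entropy_zero, ← h0, eta_zero]
    simp [hz']
  · have hPne : P ≠ 0 := ne_of_gt hpos
    set q : ι → ℝ := fun i => μ i / P with hq
    have hq0 : ∀ i, 0 ≤ q i := fun i => div_nonneg (hμ i) hP0
    have hqs : ∑ i, q i = 1 := by
      rw [hq]
      rw [← Finset.sum_div]
      rw [← hP, div_self hPne]
    set ρh := ∑ i, (q i:ℂ) • α i with hρh
    have hρhPSD : ρh.PosSemidef := posSemidef_sum_smul q hq0 α hα
    have hρhtr : ρh.trace = 1 := by
      rw [hρh, Matrix.trace_sum]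
      have : ∀ i, ((q i:ℂ) • α i).trace = (q i : ℂ) := by
        intro i
        rw [Matrix.trace_smul, hαtr i, smul_eq_mul, mul_one]
      rw [Finset.sum_congr rfl (fun i _ => this i)]
      exact_mod_cast hqs
    have hσρ : (∑ i, (μ i:ℂ) • α i) = (P:ℂ) • ρh := by
      rw [hρh, Finset.smul_sum]
      refine Finset.sum_congr rfl fun i _ => ?_
      rw [smul_smul]
      congr 1
      rw [← Complex.ofReal_mul]
      congr 1
      field_simp [hq]
      simp only [hq]
      field_simp
    rw [hσρ, entropy_coe_smul hρhPSD hρhtr hP0]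
    have hconc := sum_smul_entropy_le q α hq0 hqs hα hαtr
    have heq : ∑ i, μ i * entropy (α i) = P * ∑ i, q i * entropy (α i) := by
      rw [Finset.mul_sum]
      refine Finset.sum_congr rfl fun i _ => ?_
      rw [hq]
      field_simp
    rw [heq]
    have := mul_le_mul_of_nonneg_left hconc hP0
    rw [← hρh] at this
    linarith

/-- Partial trace (along an equivalence) of a PSD matrix is PSD. -/
lemma posSemidef_ptrace {I W C' : Type*} [Fintype I] [Fintype W] [Fintype C']
    [DecidableEq C'] (f : I ≃ W × C') {ρ : Matrix I I ℂ} (h : ρ.PosSemidef) :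
    (Matrix.of fun w w' => ∑ c, ρ (f.symm (w, c)) (f.symm (w', c)) : Matrix W W ℂ).PosSemidef := by
  refine Matrix.PosSemidef.of_dotProduct_mulVec_nonneg ?_ ?_
  · ext w w'
    simp only [Matrix.conjTranspose_apply, Matrix.of_apply]
    rw [star_sum]
    refine Finset.sum_congr rfl fun c _ => ?_
    calc star (ρ (f.symm (w', c)) (f.symm (w, c)))
        = ρᴴ (f.symm (w, c)) (f.symm (w', c)) := rfl
      _ = ρ (f.symm (w, c)) (f.symm (w', c)) := by rw [h.1]
  · intro x
    set y : C' → I → ℂ := fun c i => if (f i).2 = c then x (f i).1 else 0 with hy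
    have key : ∀ c : C', dotProduct (star (y c)) (ρ *ᵥ (y c))
        = ∑ w, ∑ w', star (x w) * (ρ (f.symm (w, c)) (f.symm (w', c)) * x w') := by
      intro c
      have h1 : ∀ i, (ρ *ᵥ (y c)) i = ∑ w', ρ i (f.symm (w', c)) * x w' := by
        intro i
        show dotProduct (fun j => ρ i j) (y c) = _
        rw [dotProduct]
        rw [← Equiv.sum_comp f.symm (fun j => ρ i j * y c j)]
        rw [Fintype.sum_prod_type]
        refine Finset.sum_congr rfl fun w' _ => ?_
        rw [Finset.sum_eq_single c]
        · simp [hy]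
        · intro b _ hb
          simp [hy, hb]
        · simp
      calc dotProduct (star (y c)) (ρ *ᵥ (y c))
          = ∑ i, star (y c i) * ∑ w', ρ i (f.symm (w', c)) * x w' := by
            rw [dotProduct]
            refine Finset.sum_congr rfl fun i _ => ?_
            rw [h1]
            rfl
        _ = ∑ w, ∑ w', star (x w) * (ρ (f.symm (w, c)) (f.symm (w', c)) * x w') := by
            rw [← Equiv.sum_comp f.symm
              (fun i => star (y c i) * ∑ w', ρ i (f.symm (w', c)) * x w')]
            rw [Fintype.sum_prod_type]
            refine Finset.sum_congr rfl fun w _ => ?_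
            rw [Finset.sum_eq_single c]
            · have hyc : y c (f.symm (w, c)) = x w := by simp [hy]
              rw [hyc, Finset.mul_sum]
            · intro b _ hb
              simp [hy, hb]
            · simp
    set N : Matrix W W ℂ := Matrix.of fun w w' => ∑ c, ρ (f.symm (w, c)) (f.symm (w', c))
      with hN
    have e1 : dotProduct (star x) (N *ᵥ x)
        = ∑ w, ∑ w', ∑ c, star (x w) * (ρ (f.symm (w, c)) (f.symm (w', c)) * x w') := by
      rw [dotProduct]
      refine Finset.sum_congr rfl fun w _ => ?_
      show star (x w) * (∑ w', (∑ c, ρ (f.symm (w, c)) (f.symm (w', c))) * x w') = _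
      rw [Finset.mul_sum]
      refine Finset.sum_congr rfl fun w' _ => ?_
      rw [Finset.sum_mul, Finset.mul_sum]
    have hsum : dotProduct (star x) (N *ᵥ x)
        = ∑ c, ∑ w, ∑ w', star (x w) * (ρ (f.symm (w, c)) (f.symm (w', c)) * x w') := by
      rw [e1]
      have e2 : ∀ w, ∑ w', ∑ c, star (x w) * (ρ (f.symm (w, c)) (f.symm (w', c)) * x w')
          = ∑ c, ∑ w', star (x w) * (ρ (f.symm (w, c)) (f.symm (w', c)) * x w') :=
        fun w => Finset.sum_comm
      rw [Finset.sum_congr rfl fun w _ => e2 w]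
      exact Finset.sum_comm
    rw [hsum]
    refine Finset.sum_nonneg fun c _ => ?_
    rw [← key c]
    exact h.dotProduct_mulVec_nonneg (y c)

section Ptrace

variable {A B : Type*} [Fintype A] [Fintype B]

lemma posSemidef_trB {ρ : Matrix (A × B) (A × B) ℂ} (h : ρ.PosSemidef) :
    (trB ρ).PosSemidef := by
  have h2 := posSemidef_ptrace (Equiv.refl (A × B)) h
  exact h2

lemma trace_trB (ρ : Matrix (A × B) (A × B) ℂ) : (trB ρ).trace = ρ.trace := by
  have h1 : (trB ρ).trace = ∑ a : A, ∑ b : B, ρ (a, b) (a, b) := rfl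
  have h2 : ρ.trace = ∑ q : A × B, ρ q q := rfl
  rw [h1, h2]
  exact (Fintype.sum_prod_type (fun q : A × B => ρ q q)).symm

lemma trB_sum {ι : Type*} [Fintype ι] (Ms : ι → Matrix (A × B) (A × B) ℂ) :
    trB (∑ i, Ms i) = ∑ i, trB (Ms i) := by
  ext a a'
  simp only [trB, Matrix.of_apply, Matrix.sum_apply]
  rw [Finset.sum_comm]

lemma trB_smul (c : ℂ) (N : Matrix (A × B) (A × B) ℂ) :
    trB (c • N) = c • trB N := by
  ext a a'
  simp [trB, Finset.mul_sum]

lemma trace_trE3 {E : Type*} [Fintype E] (ρ : Matrix (A × B × E) (A × B × E) ℂ) :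
    (trE3 ρ).trace = ρ.trace := by
  have h1 : (trE3 ρ).trace = ∑ p : A × B, ∑ e : E, ρ (p.1, p.2, e) (p.1, p.2, e) := rfl
  have h2 : ρ.trace = ∑ q : A × B × E, ρ q q := rfl
  rw [h1, h2]
  calc ∑ p : A × B, ∑ e : E, ρ (p.1, p.2, e) (p.1, p.2, e)
      = ∑ a : A, ∑ b : B, ∑ e : E, ρ (a, b, e) (a, b, e) :=
        Fintype.sum_prod_type (fun p : A × B => ∑ e : E, ρ (p.1, p.2, e) (p.1, p.2, e))
    _ = ∑ a : A, ∑ r : B × E, ρ (a, r) (a, r) := by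
        refine Finset.sum_congr rfl fun a _ => ?_
        exact (Fintype.sum_prod_type (fun r : B × E => ρ (a, r) (a, r))).symm
    _ = ∑ q : A × B × E, ρ q q := (Fintype.sum_prod_type (fun q : A × B × E => ρ q q)).symm

lemma posSemidef_proj {n : Type*} [Fintype n] {v : n → ℂ} : (proj v).PosSemidef := by
  refine Matrix.PosSemidef.of_dotProduct_mulVec_nonneg ?_ ?_
  · ext i j
    simp [proj, Matrix.conjTranspose_apply, mul_comm]
  · intro x
    have hq : dotProduct (star x) ((proj v) *ᵥ x)
        = star (∑ j, star (v j) * x j) * (∑ j, star (v j) * x j) := by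
      rw [dotProduct, star_sum]
      rw [Finset.sum_mul]
      refine Finset.sum_congr rfl fun i _ => ?_
      show star (x i) * ((fun j => proj v i j) ⬝ᵥ x) = _
      rw [dotProduct, Finset.mul_sum, Finset.mul_sum]
      refine Finset.sum_congr rfl fun j _ => ?_
      simp only [proj, Matrix.of_apply, StarMul.star_mul, star_star]
      ring
    rw [hq]
    exact star_mul_self_nonneg _
  
lemma trace_proj {n : Type*} [Fintype n] {v : n → ℂ} (hv : UnitVec v) :
    (proj v).trace = 1 := by
  rw [Matrix.trace, ← hv]
  refine Finset.sum_congr rfl fun i _ => ?_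
  show v i * star (v i) = star (v i) * v i
  ring

lemma entropy_nonneg {n : Type*} [Fintype n] [DecidableEq n] {τ : Matrix n n ℂ}
    (hτ : τ.PosSemidef) (htr : τ.trace = 1) : 0 ≤ entropy τ := by
  rw [entropy_eq_sum_eta hτ.1]
  have hsum : ∑ i, hτ.1.eigenvalues i = 1 := by
    have := trace_eq_sum_eigenvalues' hτ.1
    rw [htr] at this
    exact_mod_cast this.symm
  refine Finset.sum_nonneg fun i _ => ?_
  refine eta_nonneg (hτ.eigenvalues_nonneg i) ?_
  rw [← hsum]
  exact Finset.single_le_sum (fun j _ => hτ.eigenvalues_nonneg j) (Finset.mem_univ i)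

lemma entropy_diagonal {X : Type*} [Fintype X] [DecidableEq X] (t : X → ℝ) :
    entropy (Matrix.diagonal (fun x => ((t x : ℝ) : ℂ))) = ∑ x, eta (t x) := by
  refine entropy_eq_of_diag (one_mem _) t ?_
  simp

lemma mul_diag_conj_apply {n : Type*} [Fintype n] [DecidableEq n]
    (W : Matrix n n ℂ) (d : n → ℂ) (p q : n) :
    (W * Matrix.diagonal d * star W) p q = ∑ r, W p r * d r * star (W q r) := by
  rw [Matrix.mul_apply]
  refine Finset.sum_congr rfl fun r _ => ?_
  rw [Matrix.mul_diagonal, Matrix.star_apply]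

/-- Entropy of a block-diagonal matrix is the sum of the blocks' entropies. -/
lemma entropy_blockDiag {X A' : Type*} [Fintype X] [DecidableEq X] [Fintype A']
    [DecidableEq A'] (σ : X → Matrix A' A' ℂ) (hσ : ∀ x, (σ x).IsHermitian) :
    entropy (Matrix.of fun (p q : A' × X) =>
      if p.2 = q.2 then σ p.2 p.1 q.1 else 0) = ∑ x, entropy (σ x) := by
  set U : X → Matrix A' A' ℂ := fun x => ((hσ x).eigenvectorUnitary : Matrix A' A' ℂ) with hUdef
  have hUu : ∀ x, U x ∈ Matrix.unitaryGroup A' ℂ := fun x => (hσ x).eigenvectorUnitary.2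
  have hsx : ∀ x, σ x = U x * Matrix.diagonal (fun i => (((hσ x).eigenvalues i : ℝ) : ℂ))
      * star (U x) := by
    intro x
    convert (hσ x).spectral_theorem using 2
    rfl
  set W : Matrix (A' × X) (A' × X) ℂ :=
    Matrix.of fun p q => if p.2 = q.2 then U p.2 p.1 q.1 else 0 with hW
  have hWapp : ∀ a x c y, W (a, x) (c, y) = if x = y then U x a c else 0 := by
    intro a x c y
    by_cases hxy : x = y
    · subst hxy; simp [hW]
    · simp [hW, hxy]
  have hWu : W ∈ Matrix.unitaryGroup (A' × X) ℂ := by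
    rw [Matrix.mem_unitaryGroup_iff]
    ext ⟨a, x⟩ ⟨a', x'⟩
    rw [Matrix.mul_apply, Fintype.sum_prod_type]
    have hin : ∀ c, ∑ y, W (a, x) (c, y) * (star W) (c, y) (a', x')
        = if x = x' then U x a c * star (U x a' c) else 0 := by
      intro c
      rw [Finset.sum_eq_single x]
      · rw [Matrix.star_apply, hWapp, hWapp, if_pos rfl]
        by_cases hxx : x = x'
        · subst hxx; simp
        · rw [if_neg (fun h => hxx h.symm), if_neg hxx]
          simp
      · intro y _ hyx
        rw [hWapp, if_neg (fun h => hyx h.symm), zero_mul]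
      · simp
    rw [Finset.sum_congr rfl fun c _ => hin c]
    by_cases hxx : x = x'
    · subst hxx
      simp only [if_pos rfl]
      have h1 : (U x * star (U x)) a a' = (1 : Matrix A' A' ℂ) a a' := by
        rw [Matrix.mem_unitaryGroup_iff.mp (hUu x)]
      rw [Matrix.mul_apply] at h1
      calc ∑ c, U x a c * star (U x a' c) = (1 : Matrix A' A' ℂ) a a' := by
            rw [← h1]
            refine Finset.sum_congr rfl fun c _ => ?_
            rw [Matrix.star_apply]
        _ = (1 : Matrix (A' × X) (A' × X) ℂ) (a, x) (a', x) := by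
            by_cases haa : a = a' <;> simp [Matrix.one_apply, haa, Prod.ext_iff]
    · simp [Matrix.one_apply, Prod.ext_iff, hxx]
  have hdiag : (Matrix.of fun (p q : A' × X) =>
      if p.2 = q.2 then σ p.2 p.1 q.1 else 0) =
      W * Matrix.diagonal (fun (p : A' × X) => (((hσ p.2).eigenvalues p.1 : ℝ) : ℂ)) * star W := by
    ext ⟨a, x⟩ ⟨a', x'⟩
    rw [mul_diag_conj_apply, Fintype.sum_prod_type]
    have hin : ∀ c : A', ∑ y, W (a, x) (c, y) * (((hσ y).eigenvalues c : ℝ) : ℂ)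
          * star (W (a', x') (c, y))
        = if x = x' then U x a c * (((hσ x).eigenvalues c : ℝ) : ℂ) * star (U x a' c)
          else 0 := by
      intro c
      rw [Finset.sum_eq_single x]
      · rw [hWapp, hWapp, if_pos rfl]
        by_cases hxx : x = x'
        · subst hxx; simp
        · rw [if_neg (fun h => hxx h.symm), if_neg hxx]
          simp
      · intro y _ hyx
        rw [hWapp, if_neg (fun h => hyx h.symm), zero_mul, zero_mul]
      · simp
    rw [Finset.sum_congr rfl fun c _ => hin c]
    by_cases hxx : x = x'
    · subst hxx
      simp only [if_pos rfl, Matrix.of_apply]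
      conv_lhs => rw [hsx x]
      rw [mul_diag_conj_apply]
      simp
    · simp [Matrix.of_apply, hxx]
  rw [entropy_eq_of_diag hWu (fun p : A' × X => (hσ p.2).eigenvalues p.1) hdiag]
  rw [Fintype.sum_prod_type]
  rw [Finset.sum_comm]
  refine Finset.sum_congr rfl fun x _ => ?_
  exact (entropy_eq_sum_eta (hσ x)).symm

end Ptrace

section Tau

variable {A B C : Type*} [Fintype A] [DecidableEq A] [Fintype B] [DecidableEq B]
  [Fintype C] [DecidableEq C]

lemma sum_triple {α β γ : Type*} [Fintype α] [Fintype β] [Fintype γ]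
    {M : Type*} [AddCommMonoid M] (f : α × β × γ → M) :
    ∑ x, f x = ∑ a, ∑ b, ∑ c, f (a, b, c) := by
  rw [Fintype.sum_prod_type f]
  refine Finset.sum_congr rfl fun a _ => ?_
  exact Fintype.sum_prod_type (fun r : β × γ => f (a, r))

/-- The (unnormalized) conditional post-measurement `AB` state for POVM element `N` on `C`. -/
def tauM (ρ : Matrix (A × B × C) (A × B × C) ℂ) (N : Matrix C C ℂ) :
    Matrix (A × B) (A × B) ℂ :=
  Matrix.of fun p q => ∑ c, ∑ c', N c c' * ρ (p.1, p.2, c') (q.1, q.2, c)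

lemma tauM_one (ρ : Matrix (A × B × C) (A × B × C) ℂ) :
    tauM ρ (1 : Matrix C C ℂ) = trE3 ρ := by
  ext p q
  show ∑ c, ∑ c', (1 : Matrix C C ℂ) c c' * ρ (p.1, p.2, c') (q.1, q.2, c)
      = ∑ c, ρ (p.1, p.2, c) (q.1, q.2, c)
  refine Finset.sum_congr rfl fun c _ => ?_
  rw [Finset.sum_eq_single c]
  · rw [Matrix.one_apply_eq, one_mul]
  · intro c' _ hc'
    rw [Matrix.one_apply_ne (fun h => hc' h.symm), zero_mul]
  · simp

lemma tauM_sum {m : ℕ} (ρ : Matrix (A × B × C) (A × B × C) ℂ)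
    (M : Fin m → Matrix C C ℂ) :
    tauM ρ (∑ x, M x) = ∑ x, tauM ρ (M x) := by
  ext p q
  show ∑ c, ∑ c', (∑ x, M x) c c' * ρ (p.1, p.2, c') (q.1, q.2, c)
      = (∑ x, tauM ρ (M x)) p q
  rw [Matrix.sum_apply]
  calc ∑ c, ∑ c', (∑ x, M x) c c' * ρ (p.1, p.2, c') (q.1, q.2, c)
      = ∑ c, ∑ c', ∑ x, M x c c' * ρ (p.1, p.2, c') (q.1, q.2, c) := by
        refine Finset.sum_congr rfl fun c _ => Finset.sum_congr rfl fun c' _ => ?_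
        rw [Matrix.sum_apply, Finset.sum_mul]
    _ = ∑ c, ∑ x, ∑ c', M x c c' * ρ (p.1, p.2, c') (q.1, q.2, c) := by
        refine Finset.sum_congr rfl fun c _ => ?_
        exact Finset.sum_comm
    _ = ∑ x, ∑ c, ∑ c', M x c c' * ρ (p.1, p.2, c') (q.1, q.2, c) := Finset.sum_comm

open scoped MatrixOrder in
lemma tauM_posSemidef {ρ : Matrix (A × B × C) (A × B × C) ℂ} (hρ : ρ.PosSemidef)
    {N : Matrix C C ℂ} (hN : N.PosSemidef) : (tauM ρ N).PosSemidef := by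
  set R := CFC.sqrt N with hRdef
  have hRps : R.PosSemidef := (CFC.sqrt_nonneg N).posSemidef
  have hRH : Rᴴ = R := hRps.1
  have hRR : R * R = N := CFC.sqrt_mul_sqrt_self N hN.nonneg
  set T : Matrix (A × B × C) (A × B × C) ℂ :=
    (1 : Matrix A A ℂ) ⊗ₖ ((1 : Matrix B B ℂ) ⊗ₖ R) with hT
  have hTapp : ∀ (u i : A × B × C), T u i =
      (if u.1 = i.1 ∧ u.2.1 = i.2.1 then R u.2.2 i.2.2 else 0) := by
    rintro ⟨a, b, c⟩ ⟨α, β, γ⟩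
    by_cases h1 : a = α <;> by_cases h2 : b = β <;>
      simp [hT, Matrix.kroneckerMap_apply, Matrix.one_apply, h1, h2]
  have hG : (T * ρ * Tᴴ).PosSemidef := hρ.mul_mul_conjTranspose_same T
  have hTρ : ∀ (a : A) (b : B) (c : C) (j : A × B × C),
      (T * ρ) (a, b, c) j = ∑ γ, R c γ * ρ (a, b, γ) j := by
    intro a b c j
    rw [Matrix.mul_apply, sum_triple (fun i : A × B × C => T (a, b, c) i * ρ i j)]
    rw [Finset.sum_eq_single a]
    · rw [Finset.sum_eq_single b]
      · refine Finset.sum_congr rfl fun γ _ => ?_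
        rw [hTapp, if_pos ⟨rfl, rfl⟩]
      · intro β _ hβ
        refine Finset.sum_eq_zero fun γ _ => ?_
        rw [hTapp, if_neg (by rintro ⟨h1, h2⟩; exact hβ h2.symm), zero_mul]
      · simp
    · intro α _ hα
      refine Finset.sum_eq_zero fun β _ => Finset.sum_eq_zero fun γ _ => ?_
      rw [hTapp, if_neg (by rintro ⟨h1, h2⟩; exact hα h1.symm), zero_mul]
    · simp
  have key : tauM ρ N = Matrix.of fun (w w' : A × B) => ∑ c,
      (T * ρ * Tᴴ) ((Equiv.prodAssoc A B C).symm.symm (w, c))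
        ((Equiv.prodAssoc A B C).symm.symm (w', c)) := by
    ext p q
    have hGapp : ∀ c : C,
        (T * ρ * Tᴴ) (p.1, p.2, c) (q.1, q.2, c)
        = ∑ γ', (∑ γ, R c γ * ρ (p.1, p.2, γ) (q.1, q.2, γ')) * star (R c γ') := by
      intro c
      rw [Matrix.mul_apply, sum_triple (fun j : A × B × C =>
        (T * ρ) (p.1, p.2, c) j * Tᴴ j (q.1, q.2, c))]
      rw [Finset.sum_eq_single q.1]
      · rw [Finset.sum_eq_single q.2]
        · refine Finset.sum_congr rfl fun γ' _ => ?_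
          rw [hTρ, Matrix.conjTranspose_apply, hTapp, if_pos ⟨rfl, rfl⟩]
        · intro β _ hβ
          refine Finset.sum_eq_zero fun γ' _ => ?_
          rw [Matrix.conjTranspose_apply, hTapp,
            if_neg (by rintro ⟨h1, h2⟩; exact hβ h2.symm), star_zero, mul_zero]
        · simp
      · intro α _ hα
        refine Finset.sum_eq_zero fun β _ => Finset.sum_eq_zero fun γ' _ => ?_
        rw [Matrix.conjTranspose_apply, hTapp,
          if_neg (by rintro ⟨h1, h2⟩; exact hα h1.symm), star_zero, mul_zero]
      · simp
    have hNentry : ∀ (c c' : C), N c c' = ∑ c'', star (R c'' c) * R c'' c' := by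
      intro c c'
      rw [← hRR, Matrix.mul_apply]
      refine Finset.sum_congr rfl fun c'' _ => ?_
      congr 1
      calc R c c'' = Rᴴ c c'' := by rw [hRH]
        _ = star (R c'' c) := rfl
    show (∑ c, ∑ c', N c c' * ρ (p.1, p.2, c') (q.1, q.2, c))
        = ∑ c, (T * ρ * Tᴴ) (p.1, p.2, c) (q.1, q.2, c)
    calc ∑ c, ∑ c', N c c' * ρ (p.1, p.2, c') (q.1, q.2, c)
        = ∑ c, ∑ c', ∑ c'', star (R c'' c) * R c'' c' * ρ (p.1, p.2, c') (q.1, q.2, c) := by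
          refine Finset.sum_congr rfl fun c _ => Finset.sum_congr rfl fun c' _ => ?_
          rw [hNentry c c', Finset.sum_mul]
      _ = ∑ c, ∑ c'', ∑ c', star (R c'' c) * R c'' c' * ρ (p.1, p.2, c') (q.1, q.2, c) := by
          refine Finset.sum_congr rfl fun c _ => ?_
          exact Finset.sum_comm
      _ = ∑ c'', ∑ c, ∑ c', star (R c'' c) * R c'' c' * ρ (p.1, p.2, c') (q.1, q.2, c) :=
          Finset.sum_comm
      _ = ∑ c, ∑ γ', (∑ γ, R c γ * ρ (p.1, p.2, γ) (q.1, q.2, γ')) * star (R c γ') := by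
          refine Finset.sum_congr rfl fun c _ => Finset.sum_congr rfl fun γ' _ => ?_
          rw [Finset.sum_mul]
          refine Finset.sum_congr rfl fun γ _ => ?_
          ring
      _ = ∑ c, (T * ρ * Tᴴ) (p.1, p.2, c) (q.1, q.2, c) := by
          refine Finset.sum_congr rfl fun c _ => (hGapp c).symm
  rw [key]
  exact posSemidef_ptrace (Equiv.prodAssoc A B C).symm hG

lemma trBtau_eq (ρ : Matrix (A × B × C) (A × B × C) ℂ) (N : Matrix C C ℂ) :
    trB (((1 : Matrix A A ℂ) ⊗ₖ N) * trB3 ρ) = trB (tauM ρ N) := by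
  ext a a'
  show ∑ c, (((1 : Matrix A A ℂ) ⊗ₖ N) * trB3 ρ) (a, c) (a', c)
      = ∑ b, (tauM ρ N) (a, b) (a', b)
  have hmul : ∀ (c : C), (((1 : Matrix A A ℂ) ⊗ₖ N) * trB3 ρ) (a, c) (a', c)
      = ∑ γ, N c γ * (∑ b, ρ (a, b, γ) (a', b, c)) := by
    intro c
    rw [Matrix.mul_apply, Fintype.sum_prod_type
      (fun i : A × C => ((1 : Matrix A A ℂ) ⊗ₖ N) (a, c) i * trB3 ρ i (a', c))]
    rw [Finset.sum_eq_single a]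
    · refine Finset.sum_congr rfl fun γ _ => ?_
      show (1 : Matrix A A ℂ) a a * N c γ * trB3 ρ (a, γ) (a', c) = _
      rw [Matrix.one_apply_eq, one_mul]
      rfl
    · intro α _ hα
      refine Finset.sum_eq_zero fun γ _ => ?_
      show (1 : Matrix A A ℂ) a α * N c γ * trB3 ρ (α, γ) (a', c) = 0
      rw [Matrix.one_apply_ne (fun h => hα h.symm), zero_mul, zero_mul]
    · simp
  rw [Finset.sum_congr rfl fun c _ => hmul c]
  show _ = ∑ b, ∑ c, ∑ c', N c c' * ρ (a, b, c') (a', b, c)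
  calc ∑ c, ∑ γ, N c γ * ∑ b, ρ (a, b, γ) (a', b, c)
      = ∑ c, ∑ γ, ∑ b, N c γ * ρ (a, b, γ) (a', b, c) := by
        refine Finset.sum_congr rfl fun c _ => Finset.sum_congr rfl fun γ _ => ?_
        rw [Finset.mul_sum]
    _ = ∑ c, ∑ b, ∑ γ, N c γ * ρ (a, b, γ) (a', b, c) := by
        refine Finset.sum_congr rfl fun c _ => ?_
        exact Finset.sum_comm
    _ = ∑ b, ∑ c, ∑ γ, N c γ * ρ (a, b, γ) (a', b, c) := Finset.sum_comm

lemma postMeas_eq {m : ℕ} (ρ : Matrix (A × B × C) (A × B × C) ℂ)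
    (M : Fin m → Matrix C C ℂ) :
    postMeas M (trB3 ρ) = Matrix.of fun (p q : A × Fin m) =>
      if p.2 = q.2 then (trB (tauM ρ (M p.2))) p.1 q.1 else 0 := by
  ext p q
  show (if p.2 = q.2 then trB (((1 : Matrix A A ℂ) ⊗ₖ M p.2) * trB3 ρ) p.1 q.1 else 0) = _
  by_cases h : p.2 = q.2
  · rw [if_pos h, trBtau_eq]
    simp [h]
  · simp [h]

lemma trB_postMeas {m : ℕ} (ρ : Matrix (A × B × C) (A × B × C) ℂ)
    (M : Fin m → Matrix C C ℂ) (hMsum : ∑ x, M x = 1) :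
    trB (postMeas M (trB3 ρ)) = trB (trE3 ρ) := by
  rw [postMeas_eq]
  have h1 : trB (Matrix.of fun (p q : A × Fin m) =>
      if p.2 = q.2 then (trB (tauM ρ (M p.2))) p.1 q.1 else 0)
      = ∑ x, trB (tauM ρ (M x)) := by
    ext a a'
    show ∑ x : Fin m, (if x = x then (trB (tauM ρ (M x))) a a' else 0) = _
    rw [Matrix.sum_apply]
    refine Finset.sum_congr rfl fun x _ => ?_
    rw [if_pos rfl]
  rw [h1, ← trB_sum, ← tauM_sum, hMsum, tauM_one]

lemma trA_postMeas {m : ℕ} (ρ : Matrix (A × B × C) (A × B × C) ℂ)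
    (M : Fin m → Matrix C C ℂ) :
    trA (postMeas M (trB3 ρ))
      = Matrix.diagonal (fun x : Fin m => (tauM ρ (M x)).trace) := by
  rw [postMeas_eq]
  ext x x'
  show ∑ a, (if x = x' then (trB (tauM ρ (M x))) a a else 0) = _
  by_cases h : x = x'
  · subst h
    rw [Matrix.diagonal_apply_eq, ← trace_trB]
    refine Finset.sum_congr rfl fun a _ => ?_
    rw [if_pos rfl]
    rfl
  · rw [Matrix.diagonal_apply_ne _ h]
    simp [h]

lemma core_bound {ρ : Matrix (A × B × C) (A × B × C) ℂ}
    (hρ : IsDensityMatrix ρ) {m : ℕ} {M : Fin m → Matrix C C ℂ}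
    (hMpsd : ∀ x, (M x).PosSemidef) (hMsum : ∑ x, M x = 1) :
    eof (trE3 ρ) ≤ ∑ x, (entropy (trB (tauM ρ (M x))) - eta (((tauM ρ (M x)).trace).re)) := by
  have hτps : ∀ x, (tauM ρ (M x)).PosSemidef := fun x => tauM_posSemidef hρ.1 (hMpsd x)
  choose μ w hμ0 hw hdecomp htrace hent using fun x => spectral_ensemble (hτps x)
  have hα : ∀ x i, (trB (proj (w x i))).PosSemidef := fun x i => posSemidef_trB posSemidef_proj
  have hαtr : ∀ x i, (trB (proj (w x i))).trace = 1 := by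
    intro x i
    rw [trace_trB]
    exact trace_proj (hw x i)
  have perx : ∀ x, ∑ i, μ x i * entropy (trB (proj (w x i)))
      ≤ entropy (trB (tauM ρ (M x))) - eta (((tauM ρ (M x)).trace).re) := by
    intro x
    have hb := ensemble_entropy_bound (μ x) (fun i => trB (proj (w x i)))
      (hμ0 x) (fun i => hα x i) (fun i => hαtr x i)
    have h1 : (∑ i, (μ x i : ℂ) • trB (proj (w x i))) = trB (tauM ρ (M x)) := by
      conv_rhs => rw [hdecomp x]
      rw [trB_sum]
      refine Finset.sum_congr rfl fun i _ => ?_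
      rw [trB_smul]
    have h2 : ∑ i, μ x i = ((tauM ρ (M x)).trace).re := by
      rw [htrace x]
      simp
    rw [h1, h2] at hb
    exact hb
  have htot : ∑ x, ∑ i, μ x i = 1 := by
    have hc : ((∑ x, ∑ i, μ x i : ℝ) : ℂ) = 1 := by
      push_cast
      calc (∑ x, ∑ i, ((μ x i : ℝ) : ℂ)) = ∑ x, (tauM ρ (M x)).trace := by
            refine Finset.sum_congr rfl fun x _ => ?_
            rw [htrace x]
            push_cast
            rfl
        _ = (∑ x, tauM ρ (M x)).trace := (Matrix.trace_sum _ _).symm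
        _ = (tauM ρ (1 : Matrix C C ℂ)).trace := by rw [← tauM_sum, hMsum]
        _ = (trE3 ρ).trace := by rw [tauM_one]
        _ = 1 := by rw [trace_trE3]; exact hρ.2
    exact_mod_cast hc
  set ι := Fin m × (A × B) with hι
  set e := Fintype.equivFin ι with he
  set m' := Fintype.card ι with hm'
  set pp : Fin m' → ℝ := fun j => μ (e.symm j).1 (e.symm j).2 with hpp
  set ψ : Fin m' → (A × B → ℂ) := fun j => w (e.symm j).1 (e.symm j).2 with hψ
  have hppsum : ∑ j, pp j = 1 := by
    calc ∑ j, pp j = ∑ xi : ι, μ xi.1 xi.2 :=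
          Equiv.sum_comp e.symm (fun xi : ι => μ xi.1 xi.2)
      _ = ∑ x, ∑ i, μ x i := Fintype.sum_prod_type (fun xi : ι => μ xi.1 xi.2)
      _ = 1 := htot
  have hdec : trE3 ρ = ∑ j, (pp j : ℂ) • proj (ψ j) := by
    calc trE3 ρ = tauM ρ (1 : Matrix C C ℂ) := (tauM_one ρ).symm
      _ = ∑ x, tauM ρ (M x) := by rw [← tauM_sum, hMsum]
      _ = ∑ x, ∑ i, (μ x i : ℂ) • proj (w x i) :=
          Finset.sum_congr rfl fun x _ => hdecomp x
      _ = ∑ xi : ι, (μ xi.1 xi.2 : ℂ) • proj (w xi.1 xi.2) :=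
          (Fintype.sum_prod_type (fun xi : ι => (μ xi.1 xi.2 : ℂ) • proj (w xi.1 xi.2))).symm
      _ = ∑ j, (pp j : ℂ) • proj (ψ j) :=
          (Equiv.sum_comp e.symm (fun xi : ι => (μ xi.1 xi.2 : ℂ) • proj (w xi.1 xi.2))).symm
  have hmem : (∑ j, pp j * entropy (trB (proj (ψ j)))) ∈
      { r | ∃ (k : ℕ) (p : Fin k → ℝ) (ψ' : Fin k → (A × B → ℂ)),
        (∀ i, 0 ≤ p i) ∧ (∑ i, p i = 1) ∧ (∀ i, UnitVec (ψ' i)) ∧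
        trE3 ρ = ∑ i, (p i : ℂ) • proj (ψ' i) ∧
        r = ∑ i, p i * entropy (trB (proj (ψ' i))) } :=
    ⟨m', pp, ψ, fun j => hμ0 _ _, hppsum, fun j => hw _ _, hdec, rfl⟩
  have hbdd : BddBelow { r | ∃ (k : ℕ) (p : Fin k → ℝ) (ψ' : Fin k → (A × B → ℂ)),
      (∀ i, 0 ≤ p i) ∧ (∑ i, p i = 1) ∧ (∀ i, UnitVec (ψ' i)) ∧
      trE3 ρ = ∑ i, (p i : ℂ) • proj (ψ' i) ∧
      r = ∑ i, p i * entropy (trB (proj (ψ' i))) } := by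
    refine ⟨0, fun r hr => ?_⟩
    obtain ⟨k, pr, ψr, h0, _, hunit, _, hval⟩ := hr
    rw [hval]
    refine Finset.sum_nonneg fun i _ => mul_nonneg (h0 i) ?_
    exact entropy_nonneg (posSemidef_trB posSemidef_proj)
      (by rw [trace_trB]; exact trace_proj (hunit i))
  have hle : eof (trE3 ρ) ≤ ∑ j, pp j * entropy (trB (proj (ψ j))) := by
    unfold eof
    exact csInf_le hbdd hmem
  refine le_trans hle ?_
  calc ∑ j, pp j * entropy (trB (proj (ψ j)))
      = ∑ xi : ι, μ xi.1 xi.2 * entropy (trB (proj (w xi.1 xi.2))) :=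
        Equiv.sum_comp e.symm (fun xi : ι => μ xi.1 xi.2 * entropy (trB (proj (w xi.1 xi.2))))
    _ = ∑ x, ∑ i, μ x i * entropy (trB (proj (w x i))) :=
        Fintype.sum_prod_type (fun xi : ι => μ xi.1 xi.2 * entropy (trB (proj (w xi.1 xi.2))))
    _ ≤ ∑ x, (entropy (trB (tauM ρ (M x))) - eta (((tauM ρ (M x)).trace).re)) :=
        Finset.sum_le_sum fun x _ => perx x

lemma mi_eq (ρ : Matrix (A × B × C) (A × B × C) ℂ) {m : ℕ}
    (M : Fin m → Matrix C C ℂ) (hMpsd : ∀ x, (M x).PosSemidef)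
    (hMsum : ∑ x, M x = 1) (hρ : ρ.PosSemidef) :
    mutualInfo (postMeas M (trB3 ρ)) =
      entropy (trB (trE3 ρ)) + (∑ x, eta (((tauM ρ (M x)).trace).re))
        - ∑ x, entropy (trB (tauM ρ (M x))) := by
  have hτps : ∀ x, (tauM ρ (M x)).PosSemidef := fun x => tauM_posSemidef hρ (hMpsd x)
  have hσH : ∀ x, (trB (tauM ρ (M x))).IsHermitian := fun x => (posSemidef_trB (hτps x)).1
  rw [mutualInfo, trB_postMeas ρ M hMsum, trA_postMeas ρ M]
  have hfun : (fun x : Fin m => (tauM ρ (M x)).trace)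
      = fun x : Fin m => ((((tauM ρ (M x)).trace).re : ℝ) : ℂ) := by
    funext x
    exact (herm_trace_coe (hτps x).1).symm
  rw [hfun, entropy_diagonal (fun x : Fin m => ((tauM ρ (M x)).trace).re)]
  rw [postMeas_eq, entropy_blockDiag (fun x => trB (tauM ρ (M x))) hσH]

end Tau

end Aux

/-- **Monogamy inequality** (STATEMENT 1): for any tripartite state `ρ_ABC`,
`E_f(ρ_AB) + J(A:C) ≤ S(ρ_A)`. -/
theorem monogamy_eof_classicalCorr {A B C : Type*} [Fintype A] [DecidableEq A]
    [Fintype B] [DecidableEq B] [Fintype C] [DecidableEq C]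
    (ρ : Matrix (A × B × C) (A × B × C) ℂ) (hρ : IsDensityMatrix ρ) :
    eof (trE3 ρ) + classicalCorr (trB3 ρ) ≤ entropy (trB (trE3 ρ)) := by
  have h1 : eof (trE3 ρ) ≤ entropy (trB (trE3 ρ)) := by
    have hcb := core_bound hρ (M := fun _ : Fin 1 => (1 : Matrix C C ℂ))
      (fun _ => Matrix.PosSemidef.one) (by simp)
    have hsimp : ∑ _x : Fin 1, (entropy (trB (tauM ρ (1 : Matrix C C ℂ)))
        - eta (((tauM ρ (1 : Matrix C C ℂ)).trace).re))
        = entropy (trB (trE3 ρ)) := by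
      rw [Fin.sum_univ_one]
      rw [tauM_one, trace_trE3, hρ.2]
      simp [eta_one]
    rw [hsimp] at hcb
    exact hcb
  have h2 : ∀ r ∈ { r | ∃ (m : ℕ) (M : Fin m → Matrix C C ℂ),
      (∀ x, (M x).PosSemidef) ∧ (∑ x, M x = 1) ∧ r = mutualInfo (postMeas M (trB3 ρ)) },
      r ≤ entropy (trB (trE3 ρ)) - eof (trE3 ρ) := by
    rintro r ⟨m, M, hMpsd, hMsum, rfl⟩
    rw [mi_eq ρ M hMpsd hMsum hρ.1]
    have hcb := core_bound hρ hMpsd hMsum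
    rw [Finset.sum_sub_distrib] at hcb
    linarith
  have h3 : classicalCorr (trB3 ρ) ≤ entropy (trB (trE3 ρ)) - eof (trE3 ρ) := by
    unfold classicalCorr
    exact Real.sSup_le h2 (by linarith)
  linarith

end QI
end
end

section
/- A bipartite density matrix ρ_S on C_A ⊗ C_B is classically correlated (i.e., ρ_S = Σ_{k,j} p_{k,j} |a_k,b_j⟩⟨a_k,b_j| for orthonormal bases {|a_k⟩} of C_A and {|b_j⟩} of C_B) if and only if there exists a measurement interaction unitary U_{S:M} = U_{A:M_A} ⊗ U_{B:M_B} (each local factor acting as |k⟩|0⟩ ↦ |k⟩|k⟩ in some orthonormal basis) such that the post-interaction state U_{S:M}(ρ_S ⊗ |0⟩⟨0|_M)U_{S:M}† is separable with respect to the system : apparatus bipartition S : M. -/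
open scoped Matrix Kronecker ComplexOrder Classical
open Filter

noncomputable section

namespace QI

/-! A copy interaction that sends `eA k ⊗ refA ↦ eA k ⊗ fA k` and `eB j ⊗ refB ↦ eB j ⊗ fB j`
turns `ρ ⊗ |refA refB⟩⟨refA refB|` into `∑ ⟨u m|ρ|u m'⟩ |u m, w m⟩⟨u m', w m'|` with
`u = eA ⊗ eB` and `w = fA ⊗ fB`. This state has no population on `u m ⊗ w m'` for `m ≠ m'`,
and in a separable state such a zero population kills the coherence between `u m ⊗ w m` and
`u m' ⊗ w m'`. So separability forces `ρ` to be diagonal in the product basis `u`.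
Conversely, copying a classically correlated state in its own product eigenbasis gives
`∑ p m |u m⟩⟨u m| ⊗ |u m⟩⟨u m|`, which is separable. -/

open Matrix

/-- The matrix element `⟨x|M|y⟩`. -/
def braket {n : Type*} [Fintype n] (x : n → ℂ) (M : Matrix n n ℂ) (y : n → ℂ) : ℂ :=
  star x ⬝ᵥ (M *ᵥ y)

section Vectors

variable {α β : Type*}

theorem proj_eq_vecMulVec (v : α → ℂ) : proj v = vecMulVec v (star v) := rfl

theorem star_tensorVec (x : α → ℂ) (y : β → ℂ) :
    star (tensorVec x y) = tensorVec (star x) (star y) := by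
  ext p
  simp [tensorVec]

theorem dotProduct_tensorVec [Fintype α] [Fintype β] (x x' : α → ℂ) (y y' : β → ℂ) :
    tensorVec x y ⬝ᵥ tensorVec x' y' = (x ⬝ᵥ x') * (y ⬝ᵥ y') := by
  simp only [dotProduct, Fintype.sum_prod_type, Finset.sum_mul_sum, tensorVec]
  exact Finset.sum_congr rfl fun _ _ => Finset.sum_congr rfl fun _ _ => by ring

theorem vecMulVec_kronecker_vecMulVec (x y : α → ℂ) (x' y' : β → ℂ) :
    vecMulVec x y ⊗ₖ vecMulVec x' y' = vecMulVec (tensorVec x x') (tensorVec y y') := by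
  ext ⟨i, i'⟩ ⟨j, j'⟩
  simp only [kronecker_apply, vecMulVec_apply, tensorVec]
  ring

theorem proj_tensorVec (x : α → ℂ) (y : β → ℂ) :
    proj (tensorVec x y) = proj x ⊗ₖ proj y := by
  rw [proj_eq_vecMulVec, proj_eq_vecMulVec, proj_eq_vecMulVec, vecMulVec_kronecker_vecMulVec,
    star_tensorVec]

theorem kronecker_mulVec_tensorVec [Fintype α] [Fintype β] (S : Matrix α α ℂ) (T : Matrix β β ℂ)
    (x : α → ℂ) (y : β → ℂ) : (S ⊗ₖ T) *ᵥ tensorVec x y = tensorVec (S *ᵥ x) (T *ᵥ y) := by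
  ext ⟨i, j⟩
  simp only [mulVec, dotProduct, Fintype.sum_prod_type, Finset.sum_mul_sum, kronecker_apply,
    tensorVec]
  exact Finset.sum_congr rfl fun _ _ => Finset.sum_congr rfl fun _ _ => by ring

theorem sum_kronecker {ι : Type*} (s : Finset ι) (M : ι → Matrix α α ℂ) (N : Matrix β β ℂ) :
    (∑ i ∈ s, M i) ⊗ₖ N = ∑ i ∈ s, M i ⊗ₖ N := by
  ext
  simp [Matrix.sum_apply, Finset.sum_mul]

end Vectors

section Braket

variable {n α β : Type*} [Fintype n] [Fintype α] [Fintype β]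

theorem braket_vecMulVec (x y u v : n → ℂ) :
    braket x (vecMulVec u (star v)) y = (star x ⬝ᵥ u) * (star v ⬝ᵥ y) := by
  rw [braket, vecMulVec_mulVec, dotProduct_smul]
  simp

theorem braket_kronecker (x x' : α → ℂ) (y y' : β → ℂ) (S : Matrix α α ℂ) (T : Matrix β β ℂ) :
    braket (tensorVec x y) (S ⊗ₖ T) (tensorVec x' y') = braket x S x' * braket y T y' := by
  rw [braket, kronecker_mulVec_tensorVec, star_tensorVec, dotProduct_tensorVec, braket, braket]

theorem braket_sum {ι : Type*} (s : Finset ι) (x y : n → ℂ) (M : ι → Matrix n n ℂ) :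
    braket x (∑ i ∈ s, M i) y = ∑ i ∈ s, braket x (M i) y := by
  simp [braket, Matrix.sum_mulVec, dotProduct_sum]

theorem braket_smul (c : ℂ) (x y : n → ℂ) (M : Matrix n n ℂ) :
    braket x (c • M) y = c * braket x M y := by
  simp [braket, Matrix.smul_mulVec, dotProduct_smul]

theorem mul_mul_conjTranspose_eq_sum (G N : Matrix n n ℂ) :
    G * N * Gᴴ = ∑ p : n × n, N p.1 p.2 • vecMulVec (G.col p.1) (star (G.col p.2)) := by
  ext i j
  simp only [Matrix.mul_apply, Matrix.sum_apply, Fintype.sum_prod_type, Finset.sum_mul,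
    Matrix.smul_apply, vecMulVec_apply, conjTranspose_apply, col_apply, Pi.star_apply,
    smul_eq_mul]
  rw [Finset.sum_comm]
  exact Finset.sum_congr rfl fun _ _ => Finset.sum_congr rfl fun _ _ => by ring

namespace PosSemidef

variable {A : Matrix n n ℂ} (hA : A.PosSemidef) {x : n → ℂ} (hx : braket x A x = 0)
include hA hx

theorem braket_eq_zero_right (z : n → ℂ) : braket z A x = 0 := by
  rw [braket, (hA.dotProduct_mulVec_zero_iff x).mp hx, dotProduct_zero]

theorem braket_eq_zero_left (z : n → ℂ) : braket x A z = 0 := by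
  rw [braket, star_dotProduct, star_mulVec, ← dotProduct_mulVec, hA.1.eq, ← braket,
    braket_eq_zero_right hA hx, star_zero]

end PosSemidef

end Braket

section Orthonormal

variable {ι n : Type*} [Fintype n] [DecidableEq ι]

namespace OrthonormalFam

variable {v : ι → n → ℂ} (hv : OrthonormalFam v)
include hv

theorem star_dotProduct (i j : ι) : star (v i) ⬝ᵥ v j = if i = j then 1 else 0 := hv i j

theorem unitVec (i : ι) : UnitVec (v i) := by
  simpa [UnitVec] using hv i i

theorem comp_injective {κ : Type*} [DecidableEq κ] {σ : κ → ι} (hσ : σ.Injective) :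
    OrthonormalFam (v ∘ σ) := fun i j => by
  simp only [Function.comp_apply, hv (σ i) (σ j), hσ.eq_iff]

theorem tensor {κ m : Type*} [Fintype m] [DecidableEq κ] {w : κ → m → ℂ}
    (hw : OrthonormalFam w) : OrthonormalFam fun p : ι × κ => tensorVec (v p.1) (w p.2) := by
  intro p q
  change star (tensorVec _ _) ⬝ᵥ tensorVec _ _ = _
  rw [star_tensorVec, dotProduct_tensorVec, hv.star_dotProduct, hw.star_dotProduct]
  simp only [Prod.ext_iff, mul_ite, mul_one, mul_zero, ite_and]
  split_ifs <;> rfl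

end OrthonormalFam

end Orthonormal

section Basis

variable {n : Type*} [Fintype n] [DecidableEq n] {e : n → n → ℂ}

theorem OrthonormalFam.transpose_mem_unitaryGroup (he : OrthonormalFam e) :
    (of e)ᵀ ∈ unitaryGroup n ℂ := by
  rw [mem_unitaryGroup_iff']
  ext k l
  simpa [Matrix.mul_apply, one_apply] using he k l

theorem OrthonormalFam.star_transpose_mulVec (he : OrthonormalFam e) (k : n) :
    star (of e)ᵀ *ᵥ e k = Pi.single k 1 := by
  ext l
  simpa [mulVec, dotProduct, Pi.single_apply] using he l k

theorem exists_mem_unitaryGroup_mulVec_eq {g h : n → n → ℂ} (hg : OrthonormalFam g)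
    (hh : OrthonormalFam h) : ∃ U ∈ unitaryGroup n ℂ, ∀ k, U *ᵥ g k = h k :=
  ⟨(of h)ᵀ * star (of g)ᵀ,
    mul_mem hh.transpose_mem_unitaryGroup (Unitary.star_mem hg.transpose_mem_unitaryGroup),
    fun k => by rw [← mulVec_mulVec, hg.star_transpose_mulVec, mulVec_single_one]; rfl⟩

theorem OrthonormalFam.sum_braket_smul_vecMulVec (he : OrthonormalFam e) (M : Matrix n n ℂ) :
    ∑ p : n × n, braket (e p.1) M (e p.2) • vecMulVec (e p.1) (star (e p.2)) = M := by
  set G := (of e)ᵀ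
  have hG := he.transpose_mem_unitaryGroup
  have hentry : ∀ k l, (Gᴴ * M * G) k l = braket (e k) M (e l) := fun k l => by
    rw [mul_mul_apply]; rfl
  calc _ = G * (Gᴴ * M * G) * Gᴴ := by
        rw [mul_mul_conjTranspose_eq_sum]; simp only [hentry]; rfl
    _ = M := by
        rw [← star_eq_conjTranspose, ← Matrix.mul_assoc, ← Matrix.mul_assoc,
          mem_unitaryGroup_iff.mp hG, Matrix.one_mul, Matrix.mul_assoc,
          mem_unitaryGroup_iff.mp hG, Matrix.mul_one]

theorem OrthonormalFam.eq_sum_braket_smul_proj (he : OrthonormalFam e) {M : Matrix n n ℂ}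
    (hM : ∀ k l, k ≠ l → braket (e k) M (e l) = 0) :
    M = ∑ k, braket (e k) M (e k) • proj (e k) := by
  conv_lhs => rw [← he.sum_braket_smul_vecMulVec M, Fintype.sum_prod_type]
  refine Finset.sum_congr rfl fun k _ => Finset.sum_eq_single k (fun l _ hlk => ?_) (by simp)
  rw [hM k l (Ne.symm hlk), zero_smul]

end Basis

section States

variable {n : Type*} [Fintype n]

theorem isDensityMatrix_proj {v : n → ℂ} (hv : UnitVec v) : IsDensityMatrix (proj v) := by
  refine ⟨posSemidef_vecMulVec_self_star v, ?_⟩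
  rw [proj_eq_vecMulVec, trace_vecMulVec, dotProduct_comm]
  exact hv

theorem IsDensityMatrix.nonempty {ρ : Matrix n n ℂ} (hρ : IsDensityMatrix ρ) : Nonempty n := by
  by_contra h
  rw [not_nonempty_iff] at h
  simpa [Matrix.trace] using hρ.2

theorem isSeparable_of_sum {α β ι : Type*} [Fintype α] [Fintype β] [Fintype ι]
    (p : ι → ℝ) (σA : ι → Matrix α α ℂ) (σB : ι → Matrix β β ℂ) (hp : ∀ i, 0 ≤ p i)
    (hp1 : ∑ i, p i = 1) (hσA : ∀ i, IsDensityMatrix (σA i))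
    (hσB : ∀ i, IsDensityMatrix (σB i)) :
    IsSeparable (∑ i, (p i : ℂ) • (σA i ⊗ₖ σB i)) := by
  let e := (Fintype.equivFin ι).symm
  refine ⟨Fintype.card ι, p ∘ e, σA ∘ e, σB ∘ e, fun i => hp _, ?_, fun i => hσA _,
    fun i => hσB _, ?_⟩
  · exact (e.sum_comp p).trans hp1
  · exact (e.sum_comp fun i => (p i : ℂ) • (σA i ⊗ₖ σB i)).symm

end States

/-- In each product term either the `x`-population of the first factor or the `y'`-population
of the second one vanishes, and a positive semidefinite matrix annihilates every vector of zero
population. -/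
theorem IsSeparable.braket_eq_zero {α β : Type*} [Fintype α] [Fintype β]
    {X : Matrix (α × β) (α × β) ℂ} (hX : IsSeparable X) {x x' : α → ℂ} {y y' : β → ℂ}
    (h : braket (tensorVec x y') X (tensorVec x y') = 0) :
    braket (tensorVec x y) X (tensorVec x' y') = 0 := by
  obtain ⟨N, q, σA, σB, hq, -, hσA, hσB, rfl⟩ := hX
  simp only [braket_sum, braket_smul, braket_kronecker] at h ⊢
  have hterm : ∀ i ∈ Finset.univ,
      (q i : ℂ) * (braket x (σA i) x * braket y' (σB i) y') = 0 := by
    refine (Finset.sum_eq_zero_iff_of_nonneg fun i _ => ?_).mp h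
    exact mul_nonneg (by exact_mod_cast hq i) (mul_nonneg
      ((hσA i).1.dotProduct_mulVec_nonneg x) ((hσB i).1.dotProduct_mulVec_nonneg y'))
  refine Finset.sum_eq_zero fun i hi => ?_
  rcases mul_eq_zero.mp (hterm i hi) with hqi | hpop
  · rw [hqi, zero_mul]
  rcases mul_eq_zero.mp hpop with hx | hy'
  · rw [PosSemidef.braket_eq_zero_left (hσA i).1 hx, zero_mul, mul_zero]
  · rw [PosSemidef.braket_eq_zero_right (hσB i).1 hy', mul_zero, mul_zero]

theorem exists_mem_unitaryGroup_copy {n : Type*} [Fintype n] [DecidableEq n]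
    {e : n → n → ℂ} (he : OrthonormalFam e) (k₀ : n) :
    ∃ U ∈ unitaryGroup (n × n) ℂ, ∀ k, U *ᵥ tensorVec (e k) (e k₀) = tensorVec (e k) (e k) := by
  have hee := he.tensor he
  let σ : n × n ≃ n × n := Equiv.prodShear (Equiv.refl n) fun k => Equiv.swap k₀ k
  obtain ⟨U, hU, hUσ⟩ := exists_mem_unitaryGroup_mulVec_eq hee (hee.comp_injective σ.injective)
  refine ⟨U, hU, fun k => ?_⟩
  simpa [σ] using hUσ (k, k₀)

theorem pairKron_mulVec_tensorVec {α α' β β' : Type*} [Fintype α] [Fintype α'] [Fintype β]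
    [Fintype β'] {UA : Matrix (α × α') (α × α') ℂ} {UB : Matrix (β × β') (β × β') ℂ}
    {x x₁ : α → ℂ} {x' x₁' : α' → ℂ} {y y₁ : β → ℂ} {y' y₁' : β' → ℂ}
    (hA : UA *ᵥ tensorVec x x' = tensorVec x₁ x₁') (hB : UB *ᵥ tensorVec y y' = tensorVec y₁ y₁') :
    pairKron UA UB *ᵥ tensorVec (tensorVec x y) (tensorVec x' y') =
      tensorVec (tensorVec x₁ y₁) (tensorVec x₁' y₁') := by
  let e := Equiv.prodProdProdComm α α' β β'
  have hK : pairKron UA UB = (UA ⊗ₖ UB).submatrix e.symm e.symm := rfl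
  have hv : ∀ (u : α → ℂ) (u' : α' → ℂ) (v : β → ℂ) (v' : β' → ℂ),
      tensorVec (tensorVec u v) (tensorVec u' v') =
        tensorVec (tensorVec u u') (tensorVec v v') ∘ e.symm := fun _ _ _ _ => by
    ext
    simp only [tensorVec, Function.comp_apply, e, Equiv.prodProdProdComm_symm,
      Equiv.prodProdProdComm_apply]
    ring
  rw [hK, submatrix_mulVec_equiv, hv, Equiv.symm_symm, Function.comp_assoc, e.symm_comp_self,
    Function.comp_id, kronecker_mulVec_tensorVec, hA, hB, hv]

theorem mul_sum_kronecker_proj_mul_conjTranspose {ι m r : Type*} [Fintype ι] [Fintype m]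
    [Fintype r] (U : Matrix (m × r) (m × r) ℂ) (c : ι → ℂ) (x y : ι → m → ℂ) (ref : r → ℂ) :
    U * ((∑ i, c i • vecMulVec (x i) (star (y i))) ⊗ₖ proj ref) * Uᴴ =
      ∑ i, c i • vecMulVec (U *ᵥ tensorVec (x i) ref) (star (U *ᵥ tensorVec (y i) ref)) := by
  rw [sum_kronecker, Matrix.mul_sum, Matrix.sum_mul]
  refine Finset.sum_congr rfl fun i _ => ?_
  rw [smul_kronecker, Matrix.mul_smul, Matrix.smul_mul, proj_eq_vecMulVec,
    vecMulVec_kronecker_vecMulVec, ← star_tensorVec, mul_vecMulVec, vecMulVec_mul,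
    vecMul_conjTranspose, star_star]

theorem braket_tensorVec_sum_smul_vecMulVec {n α β : Type*} [Fintype n] [DecidableEq n]
    [Fintype α] [Fintype β] {u : n → α → ℂ} {w : n → β → ℂ} (hu : OrthonormalFam u)
    (hw : OrthonormalFam w) (c : n → n → ℂ) (a b a' b' : n) :
    braket (tensorVec (u a) (w b))
        (∑ p : n × n, c p.1 p.2 •
          vecMulVec (tensorVec (u p.1) (w p.1)) (star (tensorVec (u p.2) (w p.2))))
        (tensorVec (u a') (w b')) =
      if a = b ∧ a' = b' then c a a' else 0 := by
  simp only [braket_sum, braket_smul, braket_vecMulVec]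
  simp only [star_tensorVec, dotProduct_tensorVec, hu.star_dotProduct, hw.star_dotProduct,
    Fintype.sum_prod_type]
  by_cases h : a = b ∧ a' = b'
  · obtain ⟨rfl, rfl⟩ := h
    simp
  · rw [if_neg h]
    rcases not_and_or.mp h with h | h <;> simp [h, Ne.symm h]

section Measurement

variable {A B : Type*} [Fintype A] [DecidableEq A] [Fintype B] [DecidableEq B]
  {ρ : Matrix (A × B) (A × B) ℂ}

theorem IsCCState.exists_copy_isSeparable (hρ : IsDensityMatrix ρ) (hcc : IsCCState ρ) :
    ∃ (UA : Matrix (A × A) (A × A) ℂ) (UB : Matrix (B × B) (B × B) ℂ)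
      (refA : A → ℂ) (refB : B → ℂ),
      UnitVec refA ∧ UnitVec refB ∧ IsCopyUnitary UA refA ∧ IsCopyUnitary UB refB ∧
      IsSeparable (pairKron UA UB * (ρ ⊗ₖ proj (tensorVec refA refB)) *
        (pairKron UA UB)ᴴ) := by
  obtain ⟨⟨k₀, l₀⟩⟩ := hρ.nonempty
  obtain ⟨a, b, p, ha, hb, hp, hp1, rfl⟩ := hcc
  obtain ⟨UA, hUA, hcopyA⟩ := exists_mem_unitaryGroup_copy ha k₀
  obtain ⟨UB, hUB, hcopyB⟩ := exists_mem_unitaryGroup_copy hb l₀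
  refine ⟨UA, UB, a k₀, b l₀, ha.unitVec k₀, hb.unitVec l₀, ⟨hUA, a, a, ha, ha, hcopyA⟩,
    ⟨hUB, b, b, hb, hb, hcopyB⟩, ?_⟩
  have hρ : ∑ k, ∑ j, (p k j : ℂ) • proj (tensorVec (a k) (b j)) =
      ∑ m : A × B, (p m.1 m.2 : ℂ) • vecMulVec (tensorVec (a m.1) (b m.2))
        (star (tensorVec (a m.1) (b m.2))) :=
    (Fintype.sum_prod_type' _).symm
  rw [hρ, mul_sum_kronecker_proj_mul_conjTranspose]
  simp only [pairKron_mulVec_tensorVec (hcopyA _) (hcopyB _), ← proj_eq_vecMulVec,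
    proj_tensorVec (tensorVec _ _)]
  exact isSeparable_of_sum _ _ _ (fun m => hp m.1 m.2) ((Fintype.sum_prod_type' _).trans hp1)
    (fun m => isDensityMatrix_proj ((ha.tensor hb).unitVec m))
    (fun m => isDensityMatrix_proj ((ha.tensor hb).unitVec m))

theorem isCCState_of_braket_eq_zero (hρ : IsDensityMatrix ρ) {eA : A → A → ℂ}
    {eB : B → B → ℂ} (heA : OrthonormalFam eA) (heB : OrthonormalFam eB)
    (hoff : ∀ m m' : A × B, m ≠ m' →
      braket (tensorVec (eA m.1) (eB m.2)) ρ (tensorVec (eA m'.1) (eB m'.2)) = 0) :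
    IsCCState ρ := by
  let u : A × B → A × B → ℂ := fun m => tensorVec (eA m.1) (eB m.2)
  have hu : OrthonormalFam u := heA.tensor heB
  have hdiag := hu.eq_sum_braket_smul_proj hoff
  have hpop : ∀ m, 0 ≤ braket (u m) ρ (u m) := fun m => hρ.1.dotProduct_mulVec_nonneg (u m)
  have hreal : ∀ m, ((braket (u m) ρ (u m)).re : ℂ) = braket (u m) ρ (u m) := fun m =>
    Complex.ext rfl (Complex.nonneg_iff.mp (hpop m)).2
  refine ⟨eA, eB, fun k j => (braket (u (k, j)) ρ (u (k, j))).re, heA, heB,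
    fun k j => (Complex.nonneg_iff.mp (hpop (k, j))).1, ?_, ?_⟩
  · have htrace : ∑ m, braket (u m) ρ (u m) = 1 := by
      rw [← hρ.2]
      conv_rhs => rw [hdiag]
      simp only [trace_sum, trace_smul, (isDensityMatrix_proj (hu.unitVec _)).2, smul_eq_mul,
        mul_one]
    rw [← Fintype.sum_prod_type' fun k j => (braket (u (k, j)) ρ (u (k, j))).re,
      ← Complex.re_sum, htrace, Complex.one_re]
  · calc ρ = ∑ m, braket (u m) ρ (u m) • proj (u m) := hdiag
      _ = ∑ m, ((braket (u m) ρ (u m)).re : ℂ) • proj (u m) := by simp only [hreal]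
      _ = _ := Fintype.sum_prod_type' fun k j =>
            ((braket (u (k, j)) ρ (u (k, j))).re : ℂ) • proj (u (k, j))

theorem IsCCState.of_copy_isSeparable (hρ : IsDensityMatrix ρ) {UA : Matrix (A × A) (A × A) ℂ}
    {UB : Matrix (B × B) (B × B) ℂ} {refA : A → ℂ} {refB : B → ℂ}
    (hUA : IsCopyUnitary UA refA) (hUB : IsCopyUnitary UB refB)
    (hsep : IsSeparable (pairKron UA UB * (ρ ⊗ₖ proj (tensorVec refA refB)) *
        (pairKron UA UB)ᴴ)) :
    IsCCState ρ := by
  obtain ⟨-, eA, fA, heA, hfA, hcopyA⟩ := hUA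
  obtain ⟨-, eB, fB, heB, hfB, hcopyB⟩ := hUB
  let u : A × B → A × B → ℂ := fun m => tensorVec (eA m.1) (eB m.2)
  let w : A × B → A × B → ℂ := fun m => tensorVec (fA m.1) (fB m.2)
  have hu : OrthonormalFam u := heA.tensor heB
  have hw : OrthonormalFam w := hfA.tensor hfB
  have hX : pairKron UA UB * (ρ ⊗ₖ proj (tensorVec refA refB)) * (pairKron UA UB)ᴴ =
      ∑ p : (A × B) × (A × B), braket (u p.1) ρ (u p.2) •
        vecMulVec (tensorVec (u p.1) (w p.1)) (star (tensorVec (u p.2) (w p.2))) := by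
    conv_lhs => rw [← hu.sum_braket_smul_vecMulVec ρ]
    rw [mul_sum_kronecker_proj_mul_conjTranspose]
    simp only [u, w, pairKron_mulVec_tensorVec (hcopyA _) (hcopyB _)]
  rw [hX] at hsep
  refine isCCState_of_braket_eq_zero hρ heA heB fun m m' hm => ?_
  have := hsep.braket_eq_zero (x := u m) (y := w m) (x' := u m') (y' := w m')
    (by rw [braket_tensorVec_sum_smul_vecMulVec hu hw (fun k l => braket (u k) ρ (u l)),
      if_neg (fun h => hm h.1)])
  rwa [braket_tensorVec_sum_smul_vecMulVec hu hw (fun k l => braket (u k) ρ (u l)),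
    if_pos ⟨rfl, rfl⟩] at this

end Measurement

/-- a bipartite state is classically correlated if and only if there exists
a measurement-interaction (basis-copying) unitary `U_{S:M} = U_{A:M_A} ⊗ U_{B:M_B}` such
that the post-interaction state is separable across the system : apparatus cut. -/
theorem classicallyCorrelated_iff_activated_separable {A B : Type*} [Fintype A]
    [DecidableEq A] [Fintype B] [DecidableEq B]
    (ρ : Matrix (A × B) (A × B) ℂ) (hρ : IsDensityMatrix ρ) :
    IsCCState ρ ↔
      ∃ (UA : Matrix (A × A) (A × A) ℂ) (UB : Matrix (B × B) (B × B) ℂ)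
        (refA : A → ℂ) (refB : B → ℂ),
        UnitVec refA ∧ UnitVec refB ∧ IsCopyUnitary UA refA ∧ IsCopyUnitary UB refB ∧
        IsSeparable (pairKron UA UB * (ρ ⊗ₖ proj (tensorVec refA refB)) *
          (pairKron UA UB)ᴴ) :=
  ⟨IsCCState.exists_copy_isSeparable hρ, fun ⟨_, _, _, _, _, _, hUA, hUB, hsep⟩ =>
    IsCCState.of_copy_isSeparable hρ hUA hUB hsep⟩

end QI
end
end

section
/- For any bipartite density matrix ρ_AB, every quantumness-of-correlations measure Q_E defined through the activation protocol is lower bounded by the corresponding entanglement measure: Q_E(ρ_AB) ≥ E_Q(ρ_AB), where Q_E(ρ_S) = min over local unitaries U_S of E_Q(U_{S:M}(ρ_S ⊗ |0⟩⟨0|_M)U_{S:M}†) with the entanglement E_Q evaluated across the system : apparatus cut. -/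
open scoped Matrix Kronecker ComplexOrder Classical
open Filter

noncomputable section

namespace QI

/-! With `U = U_A ⊗ U_B`, the post-interaction state is `Δ U ρ U† Δ†`, where `Δ |i⟩ = |i⟩|i⟩`
is the copy isometry. This state is turned back into `ρ` by an LOCC channel between the system
`S = AB` and the apparatus `M = M_A M_B`: the holder of `S` measures its `B`-register, the holder
of `M` its `M_A`-register, both in the Fourier basis, and each applies the inverse local unitary
together with the diagonal phase that cancels the phase imprinted by the other party's outcome.
On the support `|i⟩|i⟩` every Kraus operator then acts as `(ab)^{-1/2} U†`, so the channel
returns `ρ`, and monotonicity of `E` under it gives `E(ρ) ≤ E(Δ U ρ U† Δ†)` for all `U_A, U_B`. -/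

theorem ofReal_sqrt_natCast_mul_self (n : ℕ) : (√(n : ℝ) : ℂ) * (√(n : ℝ) : ℂ) = n := by
  rw [← Complex.ofReal_mul, Real.mul_self_sqrt (Nat.cast_nonneg n), Complex.ofReal_natCast]

theorem kronecker_sum {ι l m n p α : Type*} [Fintype ι] [NonUnitalNonAssocSemiring α]
    (A : Matrix l m α) (B : ι → Matrix n p α) : A ⊗ₖ (∑ i, B i) = ∑ i, A ⊗ₖ B i := by
  ext ⟨i, k⟩ ⟨j, l⟩
  simp [Matrix.sum_apply, Finset.mul_sum]

theorem sum_kronecker_s9 {ι l m n p α : Type*} [Fintype ι] [NonUnitalNonAssocSemiring α]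
    (A : ι → Matrix l m α) (B : Matrix n p α) : (∑ i, A i) ⊗ₖ B = ∑ i, A i ⊗ₖ B := by
  ext ⟨i, k⟩ ⟨j, l⟩
  simp [Matrix.sum_apply, Finset.sum_mul]

theorem submatrix_swap_one_kronecker {m n α : Type*} [DecidableEq m] [CommSemiring α]
    (P : Matrix n n α) : ((1 : Matrix m m α) ⊗ₖ P).submatrix Prod.swap Prod.swap = P ⊗ₖ 1 := by
  ext ⟨i, k⟩ ⟨j, l⟩
  simp [mul_comm]

theorem submatrix_mul_mul_conjTranspose_submatrix {O S S' α : Type*} [Fintype S] [Fintype S']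
    [NonUnitalNonAssocSemiring α] [Star α] (K : Matrix O S α) (e : S' ≃ S) (ρ : Matrix S' S' α) :
    K.submatrix id e * ρ * (K.submatrix id e)ᴴ = K * Matrix.reindex e e ρ * Kᴴ := by
  have hρ : ρ = (Matrix.reindex e e ρ).submatrix e e := by simp
  conv_lhs => rw [hρ]
  rw [Matrix.conjTranspose_submatrix, Matrix.submatrix_mul_equiv, Matrix.submatrix_mul_equiv,
    Matrix.submatrix_id_id]

theorem conjTranspose_mul_self_of_mem_unitaryGroup {n α : Type*} [Fintype n] [DecidableEq n]
    [CommRing α] [StarRing α] {U : Matrix n n α} (hU : U ∈ Matrix.unitaryGroup n α) :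
    Uᴴ * U = 1 :=
  Matrix.mem_unitaryGroup_iff'.mp hU

theorem diagonal_mem_unitaryGroup {n α : Type*} [Fintype n] [DecidableEq n] [CommRing α]
    [StarRing α] {h : n → α} (hh : ∀ k, star (h k) * h k = 1) :
    Matrix.diagonal h ∈ Matrix.unitaryGroup n α := by
  rw [Matrix.mem_unitaryGroup_iff', Matrix.star_eq_conjTranspose, Matrix.diagonal_conjTranspose,
    Matrix.diagonal_mul_diagonal]
  simp_rw [Pi.star_apply, hh]
  exact Matrix.diagonal_one

theorem IsDensityMatrix.mul_mul_conjTranspose {n m : Type*} [Fintype n] [DecidableEq n]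
    [Fintype m] {ρ : Matrix n n ℂ} (hρ : IsDensityMatrix ρ) {V : Matrix m n ℂ}
    (hV : Vᴴ * V = 1) : IsDensityMatrix (V * ρ * Vᴴ) :=
  ⟨hρ.1.mul_mul_conjTranspose_same V, by
    rw [Matrix.trace_mul_cycle, hV, Matrix.one_mul, hρ.2]⟩

theorem IsDensityMatrix.reindex {n m : Type*} [Fintype n] [Fintype m] {ρ : Matrix n n ℂ}
    (hρ : IsDensityMatrix ρ) (e : n ≃ m) : IsDensityMatrix (Matrix.reindex e e ρ) :=
  ⟨hρ.1.submatrix _, by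
    rw [← hρ.2]
    exact e.symm.sum_comp fun i => ρ i i⟩

theorem isLOCCChannel_of_kraus {A B ι : Type*} [Fintype A] [DecidableEq A] [Fintype B]
    [DecidableEq B] [Fintype ι] {a b : ℕ} (L : ι → Matrix (Fin a) A ℂ)
    (R : ι → Matrix (Fin b) B ℂ) (hLR : ∑ k, (L k ⊗ₖ R k)ᴴ * (L k ⊗ₖ R k) = 1) :
    IsLOCCChannel fun ρ : Matrix (A × B) (A × B) ℂ =>
      ∑ k, (L k ⊗ₖ R k) * ρ * (L k ⊗ₖ R k)ᴴ := by
  let e := (Fintype.equivFin ι).symm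
  refine ⟨Fintype.card ι, L ∘ e, R ∘ e, ?_, fun ρ => ?_⟩
  · rw [← hLR]
    exact e.sum_comp fun k => (L k ⊗ₖ R k)ᴴ * (L k ⊗ₖ R k)
  · exact (e.sum_comp fun k => (L k ⊗ₖ R k) * ρ * (L k ⊗ₖ R k)ᴴ).symm

theorem IsLOCCChannel.comp_reindex {A B A' B' : Type*} [Fintype A] [DecidableEq A]
    [Fintype B] [DecidableEq B] [Fintype A'] [DecidableEq A'] [Fintype B'] [DecidableEq B']
    {a b : ℕ} {Λ : Matrix (A × B) (A × B) ℂ → Matrix (Fin a × Fin b) (Fin a × Fin b) ℂ}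
    (hΛ : IsLOCCChannel Λ) (eA : A' ≃ A) (eB : B' ≃ B) :
    IsLOCCChannel fun ρ => Λ (Matrix.reindex (eA.prodCongr eB) (eA.prodCongr eB) ρ) := by
  obtain ⟨m, L, R, hLR, hΛ⟩ := hΛ
  have hK : ∀ k, (L k).submatrix id eA ⊗ₖ (R k).submatrix id eB =
      (L k ⊗ₖ R k).submatrix id (eA.prodCongr eB) := fun k => by
    ext; rfl
  refine ⟨m, fun k => (L k).submatrix id eA, fun k => (R k).submatrix id eB, ?_, fun ρ => ?_⟩
  · simp only [hK, Matrix.conjTranspose_submatrix,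
      ← Matrix.submatrix_mul _ _ _ id _ Function.bijective_id]
    rw [← Matrix.submatrix_one_equiv (eA.prodCongr eB), ← hLR]
    ext
    simp [Matrix.sum_apply]
  · simp only [hΛ, hK, submatrix_mul_mul_conjTranspose_submatrix]

section Isometry

variable (n : Type*) [DecidableEq n] {m : Type*}

def attachKet (v : m → ℂ) : Matrix (n × m) n ℂ :=
  Matrix.of fun p i => if p.1 = i then v p.2 else 0

def copyIsometry : Matrix (n × n) n ℂ :=
  Matrix.of fun p i => if p = (i, i) then 1 else 0

variable {n} [Fintype n]

theorem kronecker_proj_eq_attachKet (M : Matrix n n ℂ) (v : m → ℂ) :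
    M ⊗ₖ proj v = attachKet n v * M * (attachKet n v)ᴴ := by
  ext ⟨i, k⟩ ⟨j, l⟩
  simp only [proj, attachKet, Matrix.kroneckerMap_apply, Matrix.of_apply, Matrix.mul_apply,
    Matrix.conjTranspose_apply, RCLike.star_def, apply_ite (starRingEnd ℂ), map_zero, ite_mul,
    mul_ite, zero_mul, mul_zero, Finset.sum_ite_eq, Finset.mem_univ, if_true]
  ring

theorem kronecker_one_mul_attachKet [Fintype m] [DecidableEq m] (U : Matrix n n ℂ)
    (v : m → ℂ) : (U ⊗ₖ (1 : Matrix m m ℂ)) * attachKet n v = attachKet n v * U := by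
  ext ⟨i, k⟩ j
  simp only [attachKet, Matrix.mul_apply, Matrix.kroneckerMap_apply, Matrix.one_apply,
    Matrix.of_apply, mul_ite, ite_mul, mul_one, mul_zero, zero_mul, Fintype.sum_prod_type,
    Finset.sum_ite_irrel, Finset.sum_ite_eq, Finset.sum_ite_eq', Finset.mem_univ, if_true,
    Finset.sum_const_zero]
  ring

theorem copyIsometry_conjTranspose_mul : (copyIsometry n)ᴴ * copyIsometry n = 1 := by
  ext i j
  simp [copyIsometry, Matrix.mul_apply, Matrix.one_apply, eq_comm]

end Isometry

def kronBra {P Q : Type*} (V : Matrix P P ℂ) (g : Q → ℂ) : Matrix P (P × Q) ℂ :=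
  Matrix.of fun α s => V α s.1 * star (g s.2)

theorem kronBra_conjTranspose_mul {P Q : Type*} [Fintype P] (V : Matrix P P ℂ) (g : Q → ℂ) :
    (kronBra V g)ᴴ * kronBra V g = (Vᴴ * V) ⊗ₖ proj g := by
  ext ⟨i, k⟩ ⟨j, l⟩
  simp only [kronBra, proj, Matrix.mul_apply, Matrix.conjTranspose_apply, Matrix.of_apply,
    Matrix.kroneckerMap_apply, RCLike.star_def, star_mul', RingHomCompTriple.comp_apply,
    RingHom.id_apply, Finset.sum_mul]
  refine Finset.sum_congr rfl fun _ _ => by ring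

def IsComplexHadamard {ι n : Type*} [Fintype ι] [DecidableEq n] (H : Matrix ι n ℂ) : Prop :=
  (∀ x k, star (H x k) * H x k = 1) ∧ Hᴴ * H = (Fintype.card ι : ℂ) • 1

def normalizedRow {ι n : Type*} [Fintype ι] (H : Matrix ι n ℂ) (x : ι) : n → ℂ :=
  fun k => H x k / (√(Fintype.card ι : ℝ) : ℂ)

theorem IsComplexHadamard.sum_proj_normalizedRow {ι n : Type*} [Fintype ι] [Nonempty ι]
    [DecidableEq n] {H : Matrix ι n ℂ} (hH : IsComplexHadamard H) :
    ∑ x, proj (normalizedRow H x) = 1 := by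
  have hc : (Fintype.card ι : ℂ) ≠ 0 := Nat.cast_ne_zero.mpr Fintype.card_ne_zero
  ext k l
  have hkl := congrFun (congrFun hH.2 l) k
  simp only [Matrix.mul_apply, Matrix.conjTranspose_apply, Matrix.smul_apply,
    Matrix.one_apply] at hkl
  simp only [Matrix.sum_apply, proj, normalizedRow, Matrix.of_apply, star_div₀,
    Complex.star_def, Complex.conj_ofReal, div_mul_div_comm, ofReal_sqrt_natCast_mul_self,
    ← Finset.sum_div]
  simp_rw [mul_comm (H _ k), ← Complex.star_def, hkl, Matrix.one_apply, eq_comm (a := l)]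
  split_ifs <;> simp [hc]

def fourierMatrix (n : ℕ) [NeZero n] : Matrix (ZMod n) (Fin n) ℂ :=
  Matrix.of fun x k => ZMod.stdAddChar (x * ZMod.finEquiv n k)

theorem isComplexHadamard_fourierMatrix (n : ℕ) [NeZero n] :
    IsComplexHadamard (fourierMatrix n) := by
  have hstar : ∀ u : ZMod n, star (ZMod.stdAddChar u) = ZMod.stdAddChar (-u) := fun u =>
    (AddChar.map_neg_eq_conj _ u).symm
  refine ⟨fun x k => ?_, ?_⟩
  · rw [fourierMatrix, Matrix.of_apply, hstar, ← AddChar.map_add_eq_mul, neg_add_cancel,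
      AddChar.map_zero_eq_one]
  · ext k l
    simp only [Matrix.mul_apply, Matrix.conjTranspose_apply, fourierMatrix, Matrix.of_apply,
      hstar, ← AddChar.map_add_eq_mul, ← mul_neg, ← mul_add,
      AddChar.sum_mulShift _ (ZMod.isPrimitive_stdAddChar n)]
    simp [Matrix.one_apply, neg_add_eq_zero]

section Recovery

variable {A B ι κ : Type*} [Fintype A] [DecidableEq A] [Fintype B] [DecidableEq B]
  [Fintype ι] [Fintype κ] (UA : Matrix A A ℂ) (UB : Matrix B B ℂ) (HA : Matrix ι A ℂ)
  (HB : Matrix κ B ℂ)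

def recoveryLeft (x : κ × ι) : Matrix A (A × B) ℂ :=
  kronBra (UAᴴ * Matrix.diagonal (HA x.2)) (normalizedRow HB x.1)

def recoveryRight (x : κ × ι) : Matrix B (A × B) ℂ :=
  (kronBra (UBᴴ * Matrix.diagonal (HB x.1)) (normalizedRow HA x.2)).submatrix id Prod.swap

variable {UA UB HA HB}

theorem sum_recovery_conjTranspose_mul [Nonempty ι] [Nonempty κ]
    (hUA : UA ∈ Matrix.unitaryGroup A ℂ) (hUB : UB ∈ Matrix.unitaryGroup B ℂ)
    (hHA : IsComplexHadamard HA) (hHB : IsComplexHadamard HB) :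
    ∑ x, (recoveryLeft UA HA HB x ⊗ₖ recoveryRight UB HA HB x)ᴴ *
      (recoveryLeft UA HA HB x ⊗ₖ recoveryRight UB HA HB x) = 1 := by
  have hL : ∀ x, (recoveryLeft UA HA HB x)ᴴ * recoveryLeft UA HA HB x =
      1 ⊗ₖ proj (normalizedRow HB x.1) := fun x => by
    rw [recoveryLeft, kronBra_conjTranspose_mul,
      conjTranspose_mul_self_of_mem_unitaryGroup (U := UAᴴ * Matrix.diagonal (HA x.2))
        (mul_mem (Unitary.star_mem hUA) (diagonal_mem_unitaryGroup (hHA.1 x.2)))]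
  have hR : ∀ x, (recoveryRight UB HA HB x)ᴴ * recoveryRight UB HA HB x =
      proj (normalizedRow HA x.2) ⊗ₖ 1 := fun x => by
    rw [recoveryRight, Matrix.conjTranspose_submatrix,
      ← Matrix.submatrix_mul _ _ _ id _ Function.bijective_id, kronBra_conjTranspose_mul,
      conjTranspose_mul_self_of_mem_unitaryGroup (U := UBᴴ * Matrix.diagonal (HB x.1))
        (mul_mem (Unitary.star_mem hUB) (diagonal_mem_unitaryGroup (hHB.1 x.1))),
      submatrix_swap_one_kronecker]
  simp only [Matrix.conjTranspose_kronecker, ← Matrix.mul_kronecker_mul, hL, hR,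
    Fintype.sum_prod_type, ← kronecker_sum, ← sum_kronecker_s9, hHA.sum_proj_normalizedRow,
    hHB.sum_proj_normalizedRow, Matrix.one_kronecker_one]

theorem recovery_mul_copyIsometry (hHA : IsComplexHadamard HA) (hHB : IsComplexHadamard HB)
    (x : κ × ι) :
    (recoveryLeft UA HA HB x ⊗ₖ recoveryRight UB HA HB x) * copyIsometry (A × B) =
      ((√(Fintype.card (κ × ι) : ℝ))⁻¹ : ℂ) • (UA ⊗ₖ UB)ᴴ := by
  ext ⟨α, β⟩ ⟨i, j⟩
  have hA := hHA.1 x.2 i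
  have hB := hHB.1 x.1 j
  simp only [Complex.star_def] at hA hB
  rw [Matrix.mul_apply]
  simp only [recoveryLeft, recoveryRight, kronBra, normalizedRow, copyIsometry,
    Matrix.mul_diagonal, Matrix.conjTranspose_apply, Matrix.kroneckerMap_apply,
    Matrix.of_apply, Matrix.submatrix_apply, Matrix.smul_apply, id_eq, Prod.fst_swap,
    Prod.snd_swap, RCLike.star_def, star_div₀, star_mul', Complex.conj_ofReal, smul_eq_mul,
    mul_ite, mul_one, mul_zero, Finset.sum_ite_eq', Finset.mem_univ, if_true,
    Fintype.card_prod, Nat.cast_mul, Real.sqrt_mul (Nat.cast_nonneg _), Complex.ofReal_mul,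
    mul_inv_rev]
  linear_combination (starRingEnd ℂ (UA i α) * starRingEnd ℂ (UB j β) *
    (√(Fintype.card κ : ℝ) : ℂ)⁻¹ * (√(Fintype.card ι : ℝ) : ℂ)⁻¹) *
    (starRingEnd ℂ (HB x.1 j) * HB x.1 j * hA + hB)

theorem sum_recovery_copyIsometry_conj [Nonempty ι] [Nonempty κ]
    (hUA : UA ∈ Matrix.unitaryGroup A ℂ) (hUB : UB ∈ Matrix.unitaryGroup B ℂ)
    (hHA : IsComplexHadamard HA) (hHB : IsComplexHadamard HB) (ρ : Matrix (A × B) (A × B) ℂ) :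
    ∑ x, (recoveryLeft UA HA HB x ⊗ₖ recoveryRight UB HA HB x) *
        (copyIsometry (A × B) * (UA ⊗ₖ UB) * ρ * (copyIsometry (A × B) * (UA ⊗ₖ UB))ᴴ) *
        (recoveryLeft UA HA HB x ⊗ₖ recoveryRight UB HA HB x)ᴴ = ρ := by
  set r : ℂ := (√(Fintype.card (κ × ι) : ℝ))⁻¹ with hr
  set K := fun x => recoveryLeft UA HA HB x ⊗ₖ recoveryRight UB HA HB x
  set W := copyIsometry (A × B) * (UA ⊗ₖ UB)
  change ∑ x, K x * (W * ρ * Wᴴ) * (K x)ᴴ = ρ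
  have hKW : ∀ x, K x * W = r • 1 := fun x => by
    rw [← Matrix.mul_assoc, recovery_mul_copyIsometry hHA hHB, Matrix.smul_mul,
      conjTranspose_mul_self_of_mem_unitaryGroup (Matrix.kronecker_mem_unitary hUA hUB)]
  have hterm : ∀ x, K x * (W * ρ * Wᴴ) * (K x)ᴴ = (r * r) • ρ := fun x => by
    calc K x * (W * ρ * Wᴴ) * (K x)ᴴ = (K x * W) * ρ * (K x * W)ᴴ := by
          simp only [Matrix.conjTranspose_mul, Matrix.mul_assoc]
      _ = (r * r) • ρ := by simp [hKW, r, smul_smul, Complex.conj_ofReal]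
  rw [Finset.sum_congr rfl fun x _ => hterm x, Finset.sum_const, Finset.card_univ,
    ← Nat.cast_smul_eq_nsmul ℂ, smul_smul, hr, ← mul_inv, ofReal_sqrt_natCast_mul_self,
    mul_inv_cancel₀ (Nat.cast_ne_zero.mpr Fintype.card_ne_zero), one_smul]

end Recovery

section Activation

variable {a b : ℕ} [NeZero a] [NeZero b] {UA : Matrix (Fin a) (Fin a) ℂ}
  {UB : Matrix (Fin b) (Fin b) ℂ}

theorem pairKron_cnot_mul_attachKet :
    pairKron (cnot a) (cnot b) * attachKet (Fin a × Fin b) (tensorVec (ket0 a) (ket0 b)) =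
      copyIsometry (Fin a × Fin b) := by
  ext ⟨⟨α, β⟩, ⟨μ, ν⟩⟩ ⟨α', β'⟩
  simp only [pairKron, cnot, attachKet, tensorVec, ket0, copyIsometry, Matrix.of_apply,
    Matrix.mul_apply, Fintype.sum_prod_type, mul_ite, mul_one, mul_zero, zero_add,
    Finset.sum_ite_irrel, Finset.sum_ite_eq', Finset.mem_univ, if_true, Finset.sum_const_zero,
    Prod.mk.injEq]
  split_ifs <;> tauto

theorem activatedState_eq (ρ : Matrix (Fin a × Fin b) (Fin a × Fin b) ℂ) :
    activatedState UA UB ρ = copyIsometry (Fin a × Fin b) * (UA ⊗ₖ UB) * ρ *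
      (copyIsometry (Fin a × Fin b) * (UA ⊗ₖ UB))ᴴ := by
  have hV : activationUnitary UA UB * attachKet (Fin a × Fin b) (tensorVec (ket0 a) (ket0 b)) =
      copyIsometry (Fin a × Fin b) * (UA ⊗ₖ UB) := by
    rw [activationUnitary, Matrix.mul_assoc, kronecker_one_mul_attachKet, ← Matrix.mul_assoc,
      pairKron_cnot_mul_attachKet]
  rw [activatedState, kronecker_proj_eq_attachKet, ← hV, Matrix.conjTranspose_mul]
  simp only [Matrix.mul_assoc]

theorem isDensityMatrix_activatedState (hUA : UA ∈ Matrix.unitaryGroup (Fin a) ℂ)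
    (hUB : UB ∈ Matrix.unitaryGroup (Fin b) ℂ) {ρ : Matrix (Fin a × Fin b) (Fin a × Fin b) ℂ}
    (hρ : IsDensityMatrix ρ) : IsDensityMatrix (activatedState UA UB ρ) := by
  rw [activatedState_eq]
  refine hρ.mul_mul_conjTranspose ?_
  rw [Matrix.conjTranspose_mul, Matrix.mul_assoc, ← Matrix.mul_assoc (copyIsometry _)ᴴ,
    copyIsometry_conjTranspose_mul, Matrix.one_mul,
    conjTranspose_mul_self_of_mem_unitaryGroup (Matrix.kronecker_mem_unitary hUA hUB)]

theorem exists_isLOCCChannel_activatedState_eq (hUA : UA ∈ Matrix.unitaryGroup (Fin a) ℂ)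
    (hUB : UB ∈ Matrix.unitaryGroup (Fin b) ℂ) :
    ∃ Λ : Matrix (Fin (a * b) × Fin (a * b)) (Fin (a * b) × Fin (a * b)) ℂ →
        Matrix (Fin a × Fin b) (Fin a × Fin b) ℂ,
      IsLOCCChannel Λ ∧ ∀ ρ, Λ (reindexSM (activatedState UA UB ρ)) = ρ := by
  have hHA := isComplexHadamard_fourierMatrix a
  have hHB := isComplexHadamard_fourierMatrix b
  refine ⟨_, (isLOCCChannel_of_kraus _ _
    (sum_recovery_conjTranspose_mul hUA hUB hHA hHB)).comp_reindex
      finProdFinEquiv.symm finProdFinEquiv.symm, fun ρ => ?_⟩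
  rw [reindexSM, ← Equiv.prodCongr_symm, ← Matrix.reindex_symm, Equiv.symm_apply_apply,
    activatedState_eq, sum_recovery_copyIsometry_conj hUA hUB hHA hHB]

end Activation

theorem activation_quantumness_ge_entanglement_general {a b : ℕ} [NeZero a] [NeZero b]
    (E : ∀ n m : ℕ, Matrix (Fin n × Fin m) (Fin n × Fin m) ℂ → ℝ)
    (hmono : ∀ (n m n' m' : ℕ) (σ : Matrix (Fin n × Fin m) (Fin n × Fin m) ℂ),
      IsDensityMatrix σ →
      ∀ Λ : Matrix (Fin n × Fin m) (Fin n × Fin m) ℂ →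
        Matrix (Fin n' × Fin m') (Fin n' × Fin m') ℂ,
        IsLOCCChannel Λ → E n' m' (Λ σ) ≤ E n m σ)
    (ρ : Matrix (Fin a × Fin b) (Fin a × Fin b) ℂ) (hρ : IsDensityMatrix ρ) :
    E a b ρ ≤ sInf { r | ∃ UA ∈ Matrix.unitaryGroup (Fin a) ℂ,
      ∃ UB ∈ Matrix.unitaryGroup (Fin b) ℂ,
      r = E (a * b) (a * b) (reindexSM (activatedState UA UB ρ)) } := by
  refine le_csInf ⟨_, 1, one_mem _, 1, one_mem _, rfl⟩ ?_
  rintro _ ⟨UA, hUA, UB, hUB, rfl⟩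
  obtain ⟨Λ, hΛ, hrecover⟩ := exists_isLOCCChannel_activatedState_eq hUA hUB
  calc E a b ρ = E a b (Λ (reindexSM (activatedState UA UB ρ))) := by rw [hrecover]
    _ ≤ E (a * b) (a * b) (reindexSM (activatedState UA UB ρ)) :=
      hmono _ _ _ _ _ ((isDensityMatrix_activatedState hUA hUB hρ).reindex _) Λ hΛ

/-- Piani–Adesso: for any bipartite state, any quantumness-of-correlations
measure defined through the activation protocol from an entanglement monotone `E` is
lower bounded by the entanglement of the state itself: `Q_E(ρ_AB) ≥ E(ρ_AB)`. -/
theorem activation_quantumness_ge_entanglement {a b : ℕ} [NeZero a] [NeZero b]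
    (E : ∀ n m : ℕ, Matrix (Fin n × Fin m) (Fin n × Fin m) ℂ → ℝ)
    (hmono : ∀ (n m n' m' : ℕ) (σ : Matrix (Fin n × Fin m) (Fin n × Fin m) ℂ),
      IsDensityMatrix σ →
      ∀ Λ : Matrix (Fin n × Fin m) (Fin n × Fin m) ℂ →
        Matrix (Fin n' × Fin m') (Fin n' × Fin m') ℂ,
        IsLOCCChannel Λ → E n' m' (Λ σ) ≤ E n m σ)
    (hvanish : ∀ (n m : ℕ) (σ : Matrix (Fin n × Fin m) (Fin n × Fin m) ℂ),
      IsSeparable σ → E n m σ = 0)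
    (ρ : Matrix (Fin a × Fin b) (Fin a × Fin b) ℂ) (hρ : IsDensityMatrix ρ) :
    E a b ρ ≤ sInf { r | ∃ UA ∈ Matrix.unitaryGroup (Fin a) ℂ,
      ∃ UB ∈ Matrix.unitaryGroup (Fin b) ℂ,
      r = E (a * b) (a * b) (reindexSM (activatedState UA UB ρ)) } :=
  activation_quantumness_ge_entanglement_general E hmono ρ hρ

end QI
end
end
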